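/- arXiv:0912.0051 — 8 statements merged into one kernel-verified Lean document; each statement's English description precedes it below -/
import Mathlib

section
/- Let E be a Hausdorff topological semilattice, i.e., a Hausdorff topological space with a continuous, commutative, associative, idempotent binary operation ∧, having a zero element 0 (an element with 0 ∧ x = x ∧ 0 = 0 for all x), and suppose every nonzero element of E is primitive, i.e., for all nonzero e, f ∈ E, if f ∧ e = f then f = e. Then every nonzero element of E is an isolated point of the space E. -/
/-- In a Hausdorff topological semilattice `(E, m)` with zero `z` in which
every nonzero element is primitive (minimal among the nonzero elements), every nonzero
element is an isolated point of `E`. -/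
theorem isolated_of_primitive
    {E : Type*} [TopologicalSpace E] [T2Space E]
    (m : E → E → E) (hcont : Continuous fun p : E × E => m p.1 p.2)
    (hcomm : ∀ x y : E, m x y = m y x)
    (hassoc : ∀ x y z : E, m (m x y) z = m x (m y z))
    (hidem : ∀ x : E, m x x = x)
    (z : E) (hzero : ∀ x : E, m z x = z ∧ m x z = z)
    (hprim : ∀ e f : E, e ≠ z → f ≠ z → m f e = f → f = e) :
    ∀ e : E, e ≠ z → IsOpen ({e} : Set E) := by
  intro e he
  have hφ : Continuous fun x : E => m x e :=
    hcont.comp (continuous_id.prodMk continuous_const)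
  have key : ({e} : Set E) = (fun x : E => m x e) ⁻¹' ({z}ᶜ) := by
    ext x
    simp only [Set.mem_singleton_iff, Set.mem_preimage, Set.mem_compl_iff]
    constructor
    · rintro rfl
      rw [hidem]
      exact he
    · intro hne
      -- m x e is a fixed point: m (m x e) e = m x e, so m x e = e
      have hfix : m (m x e) e = m x e := by rw [hassoc, hidem]
      have hme : m x e = e := hprim e (m x e) he hne hfix
      have hx : x ≠ z := by
        rintro rfl
        exact hne (hzero e).1
      -- m e x = e, so by primitivity e = x
      have : m e x = e := by rw [hcomm]; exact hme
      exact (hprim x e hx he this).symm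
  rw [key]
  exact (isClosed_singleton.isOpen_compl).preimage hφ
end

section
/- Let E be an infinite Hausdorff topological semilattice with a zero element 0 such that every nonzero element of E is primitive (minimal among the nonzero elements). Then the following conditions are equivalent: (i) E is compact; (ii) E is countably compact; (iii) E is pseudocompact, i.e., every locally finite family of nonempty open subsets of E is finite; (iv) every nonzero element of E is an isolated point and every open neighbourhood of 0 has finite complement (equivalently, E is the one-point Alexandroff compactification of the discrete space E \ {0}, with 0 as the point at infinity). -/
/-- For an infinite Hausdorff topological semilattice `(E, m)` with zero `z`
in which every nonzero element is primitive, the following are equivalent: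
(i) `E` is compact; (ii) `E` is countably compact (every countable open cover has a
finite subcover); (iii) `E` is pseudocompact (every locally finite family of nonempty
open subsets is finite); (iv) every nonzero element is isolated and every open
neighbourhood of `z` has finite complement (i.e. `E` is the one-point compactification
of the discrete space `E \ {z}` with `z` at infinity). -/
theorem primitive_semilattice_tfae
    {E : Type*} [TopologicalSpace E] [T2Space E] [Infinite E]
    (m : E → E → E) (hcont : Continuous fun p : E × E => m p.1 p.2)
    (hcomm : ∀ x y : E, m x y = m y x)
    (hassoc : ∀ x y z : E, m (m x y) z = m x (m y z))
    (hidem : ∀ x : E, m x x = x)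
    (z : E) (hzero : ∀ x : E, m z x = z ∧ m x z = z)
    (hprim : ∀ e f : E, e ≠ z → f ≠ z → m f e = f → f = e) :
    List.TFAE [
      CompactSpace E,
      ∀ U : ℕ → Set E, (∀ i, IsOpen (U i)) → (⋃ i, U i) = Set.univ →
        ∃ t : Finset ℕ, (⋃ i ∈ t, U i) = Set.univ,
      ∀ 𝒰 : Set (Set E), (∀ U ∈ 𝒰, IsOpen U) → (∀ U ∈ 𝒰, U.Nonempty) →
        LocallyFinite (fun U : 𝒰 => (U : Set E)) → 𝒰.Finite,
      (∀ e : E, e ≠ z → IsOpen ({e} : Set E)) ∧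
        ∀ U : Set E, IsOpen U → z ∈ U → (Uᶜ : Set E).Finite] := by
  classical
  -- every nonzero element is isolated
  have hiso : ∀ e : E, e ≠ z → IsOpen ({e} : Set E) := by
    intro e he
    have hkey : ({e} : Set E) = (fun x => m e x) ⁻¹' ({z}ᶜ) := by
      ext x
      simp only [Set.mem_singleton_iff, Set.mem_preimage, Set.mem_compl_iff]
      constructor
      · rintro rfl
        rw [hidem]; exact he
      · intro hne
        have hx : x ≠ z := by
          rintro rfl
          exact hne (hzero e).2
        have h1 : m (m e x) e = m e x := by
          rw [hassoc, hcomm x e, ← hassoc, hidem]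
        have h2 : m (m e x) x = m e x := by
          rw [hassoc, hidem]
        have he' := hprim e (m e x) he hne h1
        have hx' := hprim x (m e x) hx hne h2
        rw [← he', hx']
    rw [hkey]
    exact IsOpen.preimage (hcont.comp (continuous_const.prodMk continuous_id)) isClosed_singleton.isOpen_compl
  have hopen : ∀ S : Set E, z ∉ S → IsOpen S := by
    intro S hS
    have : S = ⋃ x ∈ S, ({x} : Set E) := by ext y; simp
    rw [this]
    exact isOpen_biUnion fun x hx => hiso x (fun h => hS (h ▸ hx))
  tfae_have 1 → 2
  | h, U, hU, hcov => by
    obtain ⟨t, ht⟩ := isCompact_univ.elim_finite_subcover U hU hcov.ge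
    exact ⟨t, Set.univ_subset_iff.mp ht⟩
  tfae_have 2 → 4
  | h => by
    refine ⟨hiso, fun U hU hzU => ?_⟩
    by_contra hinf
    have hinf' : (Uᶜ : Set E).Infinite := hinf
    obtain ⟨f, hfinj⟩ : ∃ f : ℕ → E, Function.Injective f ∧ ∀ n, f n ∈ Uᶜ := by
      let g := hinf'.natEmbedding
      exact ⟨fun n => (g n : E), fun a b hab => g.injective (Subtype.ext hab), fun n => (g n).2⟩
    obtain ⟨hfinj, hfU⟩ := hfinj
    set V : ℕ → Set E := fun n => Nat.rec (U ∪ (Uᶜ \ Set.range f)) (fun k _ => {f k}) n with hV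
    have hVopen : ∀ n, IsOpen (V n) := by
      rintro (_ | n)
      · refine hU.union (hopen _ ?_)
        rintro ⟨hz1, -⟩
        exact hz1 hzU
      · exact hiso _ (fun h => (hfU n) (h ▸ hzU))
    have hVcov : (⋃ n, V n) = Set.univ := by
      ext x
      simp only [Set.mem_iUnion, Set.mem_univ, iff_true]
      by_cases hx : x ∈ U
      · exact ⟨0, Or.inl hx⟩
      · by_cases hr : x ∈ Set.range f
        · obtain ⟨n, rfl⟩ := hr
          exact ⟨n + 1, rfl⟩
        · exact ⟨0, Or.inr ⟨hx, hr⟩⟩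
    obtain ⟨t, ht⟩ := h V hVopen hVcov
    obtain ⟨N, hN⟩ := t.exists_nat_subset_range
    have : f N ∈ ⋃ i ∈ t, V i := ht ▸ Set.mem_univ _
    simp only [Set.mem_iUnion] at this
    obtain ⟨i, hit, hfi⟩ := this
    match i, hfi with
    | 0, hfi =>
      rcases hfi with h1 | h2
      · exact hfU N h1
      · exact h2.2 ⟨N, rfl⟩
    | (k+1), hfi =>
      have : f N = f k := hfi
      have hkN : k = N := by
        have := hfinj this
        omega
      have : k + 1 ∈ Finset.range N := hN hit
      simp [hkN] at this
  tfae_have 4 → 1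
  | ⟨_, h4⟩ => by
    constructor
    rw [isCompact_iff_finite_subcover]
    intro ι U hU hcov
    obtain ⟨i₀, hi₀⟩ : ∃ i, z ∈ U i := by
      have := hcov (Set.mem_univ z)
      simpa using this
    have hfin := h4 (U i₀) (hU i₀) hi₀
    choose g hg using fun x (hx : x ∈ (U i₀)ᶜ) => by
      have := hcov (Set.mem_univ x)
      simpa using this
    refine ⟨insert i₀ (hfin.toFinset.attach.image
      (fun p => g p.1 (hfin.mem_toFinset.mp p.2))), fun x _ => ?_⟩
    by_cases hx : x ∈ U i₀
    · exact Set.mem_biUnion (Finset.mem_insert_self _ _) hx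
    · refine Set.mem_biUnion (Finset.mem_insert_of_mem ?_) (hg x hx)
      exact Finset.mem_image.mpr ⟨⟨x, hfin.mem_toFinset.mpr hx⟩, Finset.mem_attach _ _, rfl⟩
  tfae_have 1 → 3
  | h, 𝒰, hopen', hne, hlf => by
    have := hlf.finite_of_compact (fun U => hne U U.2)
    rw [Set.finite_univ_iff] at this
    exact Set.toFinite 𝒰
  tfae_have 3 → 4
  | h3 => by
    refine ⟨hiso, fun U hU hzU => ?_⟩
    by_contra hinf
    have hinf' : (Uᶜ : Set E).Infinite := hinf
    set 𝒰 : Set (Set E) := (fun e => ({e} : Set E)) '' Uᶜ with h𝒰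
    have hfin : 𝒰.Finite := by
      refine h3 𝒰 ?_ ?_ ?_
      · rintro V ⟨e, he, rfl⟩
        exact hiso e (fun h => he (h ▸ hzU))
      · rintro V ⟨e, he, rfl⟩
        exact ⟨e, rfl⟩
      · intro x
        by_cases hx : x = z
        · refine ⟨U, hU.mem_nhds (hx ▸ hzU), ?_⟩
          apply Set.Finite.subset (Set.finite_empty)
          rintro ⟨V, ⟨e, he, rfl⟩⟩ ⟨y, hy1, hy2⟩
          exact he ((Set.mem_singleton_iff.mp hy1) ▸ hy2)
        · refine ⟨{x}, (hiso x hx).mem_nhds rfl, ?_⟩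
          have hsub : {V : ↥𝒰 | ((V : Set E) ∩ {x}).Nonempty} ⊆
              {V : ↥𝒰 | (V : Set E) = {x}} := by
            rintro ⟨V, ⟨e, he, rfl⟩⟩ ⟨y, hy1, hy2⟩
            have : e = x := by
              have := Set.mem_singleton_iff.mp hy1
              have h2 := Set.mem_singleton_iff.mp hy2
              rw [← h2, this]
            simp [this]
          refine Set.Finite.subset ?_ hsub
          apply Set.Subsingleton.finite
          intro V₁ h1 V₂ h2
          exact Subtype.ext (h1.trans h2.symm)
    have hinj : Set.InjOn (fun e => ({e} : Set E)) Uᶜ := fun a _ b _ hab =>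
      Set.singleton_eq_singleton_iff.mp hab
    exact (hinf'.image hinj) hfin
  tfae_finish
end

section
/- Let X be an infinite type, let τ be a topology on the semigroup of matrix units B_λ (λ = |X|) making it a topological semigroup, let T be a topological semigroup, and let f : B_λ → T be an injective semigroup homomorphism that is a topological embedding with dense image. Then: (i) f(0) is a two-sided zero of T, i.e., f(0)·t = t·f(0) = f(0) for all t ∈ T; (ii) every x ∈ T \ f(B_λ) satisfies x·x = f(0); and (iii) the idempotents of T are exactly the images under f of the idempotents of B_λ. -/
open scoped Classical

universe u v

/-- The semigroup of λ×λ-matrix units over the index type `X` (of cardinality λ):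
the set `(X × X) ∪ {0}`, realized as `Option (X × X)` with `none` as the zero. -/
abbrev MatrixUnits (X : Type u) : Type u := Option (X × X)

/-- Multiplication of matrix units: `(a,b)·(c,d) = (a,d)` if `b = c`, and `0` otherwise;
`0` is a two-sided zero. -/
noncomputable def muMul {X : Type u} : MatrixUnits X → MatrixUnits X → MatrixUnits X
  | some (a, b), some (c, d) => if b = c then some (a, d) else none
  | none, _ => none
  | some _, none => none

noncomputable instance {X : Type u} : Semigroup (MatrixUnits X) where
  mul := muMul
  mul_assoc x y z := by
    show muMul (muMul x y) z = muMul x (muMul y z)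
    rcases x with _ | ⟨a, b⟩ <;> rcases y with _ | ⟨c, d⟩ <;> rcases z with _ | ⟨e, f⟩ <;>
      simp only [muMul] <;> split_ifs <;> simp_all [muMul]

/-- The band (set of idempotents) of the semigroup of matrix units:
`{(a,a) : a ∈ X} ∪ {0}`. -/
def MUBand (X : Type u) : Set (MatrixUnits X) :=
  insert none {x : MatrixUnits X | ∃ a : X, x = some (a, a)}

lemma mu_none_mul {X : Type u} (x : MatrixUnits X) : (none : MatrixUnits X) * x = none := rfl

lemma mu_mul_none {X : Type u} (x : MatrixUnits X) : x * (none : MatrixUnits X) = none := by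
  rcases x with _ | ⟨a, b⟩ <;> rfl

lemma mu_pair_lemma {X : Type u} (p q : X × X) (hpq : p ≠ q) :
    ∃ u v : X × X, (u = p ∨ u = q) ∧ (v = p ∨ v = q) ∧
      (some u : MatrixUnits X) * some v = none := by
  have key : ∃ u v : X × X, (u = p ∨ u = q) ∧ (v = p ∨ v = q) ∧ u.2 ≠ v.1 := by
    by_contra h
    push_neg at h
    have h1 := h p p (Or.inl rfl) (Or.inl rfl)
    have h2 := h p q (Or.inl rfl) (Or.inr rfl)
    have h3 := h q q (Or.inr rfl) (Or.inr rfl)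
    have h4 := h q p (Or.inr rfl) (Or.inl rfl)
    exact hpq (Prod.ext (by rw [← h4, h3, ← h2, h1]) (by rw [h2, h3]))
  obtain ⟨u, v, hu, hv, huv⟩ := key
  refine ⟨u, v, hu, hv, ?_⟩
  show muMul (some u) (some v) = none
  rcases u with ⟨a, b⟩; rcases v with ⟨c, d⟩
  simp only [muMul, if_neg huv]

/-- If a topological semigroup `T` contains the infinite semigroup of matrix
units `B_λ` as a dense subsemigroup (via the embedding `f`), then: (i) `f 0` is a two-sided
zero of `T`; (ii) every `x ∈ T \ f(B_λ)` satisfies `x·x = f 0`; (iii) the idempotents of `T`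
are exactly the images under `f` of the idempotents of `B_λ`. -/
theorem dense_matrixUnits_properties
    {X : Type u} [Infinite X]
    [TopologicalSpace (MatrixUnits X)] [T2Space (MatrixUnits X)]
    [ContinuousMul (MatrixUnits X)]
    {T : Type v} [Semigroup T] [TopologicalSpace T] [T2Space T] [ContinuousMul T]
    (f : MatrixUnits X → T)
    (hhom : ∀ a b : MatrixUnits X, f (a * b) = f a * f b)
    (hinj : Function.Injective f)
    (hemb : Topology.IsEmbedding f)
    (hdense : DenseRange f) :
    (∀ t : T, f none * t = f none ∧ t * f none = f none) ∧
      (∀ x : T, x ∉ Set.range f → x * x = f none) ∧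
      {t : T | t * t = t} = f '' {x : MatrixUnits X | x * x = x} := by
  have part2 : ∀ x : T, x ∉ Set.range f → x * x = f none := by
    intro x hx
    have key : ∀ W : Set T, IsOpen W → x * x ∈ W → f none ∈ W := by
      intro W hW hxW
      have hV : IsOpen {p : T × T | p.1 * p.2 ∈ W} := hW.preimage continuous_mul
      rw [isOpen_prod_iff] at hV
      obtain ⟨u, v, hu, hv, hxu, hxv, huv⟩ := hV x x hxW
      set U := u ∩ v with hUdef
      have hUopen : IsOpen U := hu.inter hv
      have hxU : x ∈ U := ⟨hxu, hxv⟩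
      have hmulW : ∀ a ∈ U, ∀ b ∈ U, a * b ∈ W := fun a ha b hb =>
        huv (Set.mk_mem_prod ha.1 hb.2)
      -- find two distinct elements of B with image in U
      obtain ⟨s1, hy1U⟩ := hdense.exists_mem_open hUopen ⟨x, hxU⟩
      have hU'open : IsOpen (U \ {f s1}) := hUopen.sdiff isClosed_singleton
      have hxU' : x ∈ U \ {f s1} := ⟨hxU, fun h => hx ⟨s1, (h : x = f s1).symm⟩⟩
      obtain ⟨s2, hy2U⟩ := hdense.exists_mem_open hU'open ⟨x, hxU'⟩
      have hs12 : s1 ≠ s2 := fun h => hy2U.2 (by rw [h]; exact rfl)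
      -- produce s t with f s ∈ U, f t ∈ U, s * t = none
      have : ∃ s t : MatrixUnits X, f s ∈ U ∧ f t ∈ U ∧ s * t = none := by
        rcases s1 with _ | p
        · exact ⟨none, none, hy1U, hy1U, rfl⟩
        · rcases s2 with _ | q
          · exact ⟨none, none, hy2U.1, hy2U.1, rfl⟩
          · have hpq : p ≠ q := fun h => hs12 (by rw [h])
            obtain ⟨a, b, ha, hb, hab⟩ := mu_pair_lemma p q hpq
            refine ⟨some a, some b, ?_, ?_, hab⟩
            · rcases ha with h | h <;> rw [h]
              exacts [hy1U, hy2U.1]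
            · rcases hb with h | h <;> rw [h]
              exacts [hy1U, hy2U.1]
      obtain ⟨s, t, hsU, htU, hst⟩ := this
      have := hmulW _ hsU _ htU
      rwa [← hhom, hst] at this
    by_contra hne
    have hopen : IsOpen ({f none}ᶜ : Set T) := isClosed_singleton.isOpen_compl
    exact key _ hopen hne (by simp)
  refine ⟨?_, part2, ?_⟩
  · intro t
    constructor
    · have : (fun t : T => f none * t) = fun _ => f none := by
        refine hdense.equalizer (continuous_const.mul continuous_id) continuous_const ?_
        funext s
        show f none * f s = f none
        rw [← hhom, mu_none_mul]
      exact congrFun this t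
    · have : (fun t : T => t * f none) = fun _ => f none := by
        refine hdense.equalizer (continuous_id.mul continuous_const) continuous_const ?_
        funext s
        show f s * f none = f none
        rw [← hhom, mu_mul_none]
      exact congrFun this t
  · ext t
    simp only [Set.mem_setOf_eq, Set.mem_image]
    constructor
    · intro ht
      by_cases hr : t ∈ Set.range f
      · obtain ⟨s, rfl⟩ := hr
        refine ⟨s, hinj ?_, rfl⟩
        rw [hhom]; exact ht
      · exact absurd (ht ▸ part2 t hr ▸ Set.mem_range_self none : t ∈ Set.range f) hr
    · rintro ⟨s, hs, rfl⟩
      rw [← hhom, hs]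
end

section
/- Let X be an infinite type and let T be a countably compact topological semigroup. Then there is no injective semigroup homomorphism from the semigroup of matrix units B_λ (λ = |X|) into T. -/
open scoped Classical

universe u v

/- ### Auxiliary lemmas -/

theorem mu_some_some {X : Type u} (p q p' q' : X) :
    (some (p, q) * some (p', q') : MatrixUnits X)
      = if q = p' then some (p, q') else none := rfl

theorem mu_none_none {X : Type u} :
    ((none : MatrixUnits X) * none) = none := rfl

section TopAux

variable {T : Type v} [TopologicalSpace T]

/-- In a countably compact space, every sequence has a point that lies in the closure of
every tail. -/
theorem MUaux.exists_cluster [Nonempty T]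
    (hcc : ∀ U : ℕ → Set T, (∀ i, IsOpen (U i)) → (⋃ i, U i) = Set.univ →
      ∃ t : Finset ℕ, (⋃ i ∈ t, U i) = Set.univ) (x : ℕ → T) :
    ∃ v : T, ∀ N : ℕ, v ∈ closure (x '' Set.Ici N) := by
  by_contra h
  push_neg at h
  have hcover : (⋃ N, (closure (x '' Set.Ici N))ᶜ) = Set.univ := by
    ext w
    simp only [Set.mem_iUnion, Set.mem_compl_iff, Set.mem_univ, iff_true]
    exact h w
  obtain ⟨t, ht⟩ := hcc _ (fun N => isClosed_closure.isOpen_compl) hcover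
  have hx : x (t.sup id) ∈ ⋃ i ∈ t, (closure (x '' Set.Ici i))ᶜ := by
    rw [ht]; exact Set.mem_univ _
  simp only [Set.mem_iUnion, Set.mem_compl_iff] at hx
  obtain ⟨i, hit, hi⟩ := hx
  exact hi (subset_closure ⟨t.sup id, Finset.le_sup (f := id) hit, rfl⟩)

/-- From a cluster point, extract terms of the sequence in any open neighbourhood,
beyond any given index. -/
theorem MUaux.cluster_extract {x : ℕ → T} {v : T}
    (hv : ∀ N : ℕ, v ∈ closure (x '' Set.Ici N)) {U : Set T} (hU : IsOpen U)
    (hvU : v ∈ U) (N : ℕ) : ∃ n, N ≤ n ∧ x n ∈ U := by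
  have := (mem_closure_iff.mp (hv N)) U hU hvU
  obtain ⟨y, hyU, ⟨n, hn, rfl⟩⟩ := this
  exact ⟨n, hn, hyU⟩

/-- A continuous map that eventually collapses a sequence to `z` collapses every
cluster point to `z`. -/
theorem MUaux.cluster_map [T1Space T] {x : ℕ → T} {v : T}
    (hv : ∀ N : ℕ, v ∈ closure (x '' Set.Ici N)) {g : T → T} (hg : Continuous g)
    {z : T} (N₀ : ℕ) (hz : ∀ n, N₀ ≤ n → g (x n) = z) : g v = z := by
  have h1 : g v ∈ g '' closure (x '' Set.Ici N₀) := ⟨v, hv N₀, rfl⟩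
  have h2 : g '' closure (x '' Set.Ici N₀) ⊆ closure (g '' (x '' Set.Ici N₀)) :=
    image_closure_subset_closure_image hg
  have h3 : g '' (x '' Set.Ici N₀) ⊆ {z} := by
    rintro _ ⟨_, ⟨n, hn, rfl⟩, rfl⟩
    exact hz n hn
  have h4 : g v ∈ closure ({z} : Set T) := closure_mono h3 (h2 h1)
  rwa [closure_singleton, Set.mem_singleton_iff] at h4

/-- In a countably compact space, a sequence all of whose cluster points equal `z`
converges to `z`. -/
theorem MUaux.tendsto_of_unique_cluster [Nonempty T]
    (hcc : ∀ U : ℕ → Set T, (∀ i, IsOpen (U i)) → (⋃ i, U i) = Set.univ →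
      ∃ t : Finset ℕ, (⋃ i ∈ t, U i) = Set.univ)
    {x : ℕ → T} {z : T}
    (huniq : ∀ v : T, (∀ N : ℕ, v ∈ closure (x '' Set.Ici N)) → v = z) :
    Filter.Tendsto x Filter.atTop (nhds z) := by
  rw [tendsto_atTop_nhds]
  by_contra h
  push_neg at h
  obtain ⟨U, hzU, hUopen, hfreq⟩ := h
  choose g hg1 hg2 using hfreq
  obtain ⟨v, hv⟩ := MUaux.exists_cluster hcc (fun N => x (g N))
  have hvx : ∀ N : ℕ, v ∈ closure (x '' Set.Ici N) := by
    intro N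
    refine closure_mono ?_ (hv N)
    rintro _ ⟨m, hm, rfl⟩
    exact ⟨g m, le_trans hm (hg1 m), rfl⟩
  have hvz := huniq v hvx
  have hcompl : v ∈ closure (Uᶜ) := by
    refine closure_mono ?_ (hv 0)
    rintro _ ⟨m, _, rfl⟩
    exact hg2 m
  rw [hvz, hUopen.isClosed_compl.closure_eq] at hcompl
  exact hcompl hzU

/-- Continuity of multiplication at a pair, in terms of open sets. -/
theorem MUaux.mul_cont_sep [Mul T] [ContinuousMul T]
    {p q : T} {W : Set T} (hW : IsOpen W) (hpq : p * q ∈ W) :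
    ∃ U V : Set T, IsOpen U ∧ IsOpen V ∧ p ∈ U ∧ q ∈ V ∧
      ∀ u ∈ U, ∀ w ∈ V, u * w ∈ W := by
  have hop : IsOpen ((fun r : T × T => r.1 * r.2) ⁻¹' W) := hW.preimage continuous_mul
  obtain ⟨U, V, hU, hV, hp, hq, hsub⟩ := isOpen_prod_iff.mp hop p q hpq
  exact ⟨U, V, hU, hV, hp, hq, fun u hu w hw => hsub (Set.mk_mem_prod hu hw)⟩

end TopAux

/-- An infinite semigroup of matrix units does not embed into a countably
compact topological semigroup. -/
theorem no_embedding_matrixUnits_into_countablyCompact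
    {X : Type u} [Infinite X]
    {T : Type v} [Semigroup T] [TopologicalSpace T] [T2Space T] [ContinuousMul T]
    (hcc : ∀ U : ℕ → Set T, (∀ i, IsOpen (U i)) → (⋃ i, U i) = Set.univ →
      ∃ t : Finset ℕ, (⋃ i ∈ t, U i) = Set.univ) :
    ¬ ∃ f : MatrixUnits X → T,
        (∀ a b : MatrixUnits X, f (a * b) = f a * f b) ∧ Function.Injective f := by
  rintro ⟨f, hf, hinj⟩
  have : Nonempty T := ⟨f none⟩
  -- an injective sequence of indices
  set a : ℕ → X := fun n => (Infinite.natEmbedding X) n with ha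
  have hainj : Function.Injective a := (Infinite.natEmbedding X).injective
  have hane : ∀ n m : ℕ, n ≠ m → a n ≠ a m := fun n m h hc => h (hainj hc)
  -- the distinguished elements
  set z : T := f none with hz
  set E : T := f (some (a 0, a 0)) with hE
  set e : ℕ → T := fun n => f (some (a (n + 1), a (n + 1))) with he
  set s : ℕ → T := fun n => f (some (a 0, a (n + 1))) with hs
  set r : ℕ → T := fun n => f (some (a (n + 1), a 0)) with hr
  -- algebraic relations
  have hEz : E ≠ z := fun h => Option.some_ne_none _ (hinj h)
  have hee : ∀ n m : ℕ, n ≠ m → e n * e m = z := by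
    intro n m hnm
    rw [he, hz, ← hf, mu_some_some, if_neg (hane _ _ (by omega))]
  have heidem : ∀ n : ℕ, e n * e n = e n := by
    intro n
    rw [he, ← hf, mu_some_some, if_pos rfl]
  have hse : ∀ n m : ℕ, n ≠ m → s n * e m = z := by
    intro n m hnm
    rw [hs, he, hz, ← hf, mu_some_some, if_neg (hane _ _ (by omega))]
  have hsen : ∀ n : ℕ, s n * e n = s n := by
    intro n
    rw [hs, he, ← hf, mu_some_some, if_pos rfl]
  have her : ∀ n m : ℕ, n ≠ m → e n * r m = z := by
    intro n m hnm
    rw [he, hr, hz, ← hf, mu_some_some, if_neg (hane _ _ (by omega))]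
  have hern : ∀ n : ℕ, e n * r n = r n := by
    intro n
    rw [he, hr, ← hf, mu_some_some, if_pos rfl]
  have hsr : ∀ n : ℕ, s n * r n = E := by
    intro n
    rw [hs, hr, hE, ← hf, mu_some_some, if_pos rfl]
  -- Step 1: every cluster point of `e` is `z`; hence `e` tends to `z`.
  have heclusterz : ∀ v : T, (∀ N : ℕ, v ∈ closure (e '' Set.Ici N)) → v = z := by
    intro v hv
    by_contra hvne
    -- first: v * v = z
    have hvv : v * v = z := by
      have : v * v ∈ closure ({z} : Set T) := by
        rw [mem_closure_iff]
        intro W hW hvvW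
        obtain ⟨U, V, hU, hV, hvU, hvV, hprod⟩ := MUaux.mul_cont_sep hW hvvW
        obtain ⟨n, -, hn⟩ := MUaux.cluster_extract hv (hU.inter hV) ⟨hvU, hvV⟩ 0
        obtain ⟨m, hm, hm'⟩ := MUaux.cluster_extract hv (hU.inter hV) ⟨hvU, hvV⟩ (n + 1)
        refine ⟨z, ?_, rfl⟩
        rw [← hee n m (by omega)]
        exact hprod _ hn.1 _ hm'.2
      rwa [closure_singleton, Set.mem_singleton_iff] at this
    obtain ⟨Wv, Wz, hWv, hWz, hvWv, hzWz, hdisj⟩ := t2_separation hvne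
    obtain ⟨U, V, hU, hV, hvU, hvV, hprod⟩ :=
      MUaux.mul_cont_sep hWz (by rw [hvv]; exact hzWz)
    obtain ⟨n, -, hn⟩ :=
      MUaux.cluster_extract hv ((hU.inter hV).inter hWv) ⟨⟨hvU, hvV⟩, hvWv⟩ 0
    have h1 : e n ∈ Wz := by
      rw [← heidem n]
      exact hprod _ hn.1.1 _ hn.1.2
    exact Set.disjoint_left.mp hdisj hn.2 h1
  have hetend : Filter.Tendsto e Filter.atTop (nhds z) :=
    MUaux.tendsto_of_unique_cluster hcc heclusterz
  -- Step 2: every cluster point of `s` is `z`; hence `s` tends to `z`.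
  have hsclusterz : ∀ v : T, (∀ N : ℕ, v ∈ closure (s '' Set.Ici N)) → v = z := by
    intro t ht
    by_contra htne
    -- t * e m = z for every m
    have htem : ∀ m : ℕ, t * e m = z := by
      intro m
      exact MUaux.cluster_map ht (continuous_mul_right (e m)) (m + 1)
        (fun n hn => hse n m (by omega))
    -- hence t * z = z
    have htz : t * z = z := by
      have h1 : Filter.Tendsto (fun m => t * e m) Filter.atTop (nhds (t * z)) :=
        hetend.const_mul t
      have h2 : Filter.Tendsto (fun m => t * e m) Filter.atTop (nhds z) := by
        simpa only [htem] using (tendsto_const_nhds : Filter.Tendsto (fun _ : ℕ => z)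
          Filter.atTop (nhds z))
      exact tendsto_nhds_unique h1 h2
    obtain ⟨Wt, Wz, hWt, hWz, htWt, hzWz, hdisj⟩ := t2_separation htne
    obtain ⟨U, V, hU, hV, htU, hzV, hprod⟩ :=
      MUaux.mul_cont_sep hWz (by rw [htz]; exact hzWz)
    -- e n ∈ V eventually
    obtain ⟨N₁, hN₁⟩ := (tendsto_atTop_nhds.mp hetend) V hzV hV
    obtain ⟨n, hnN, hn⟩ :=
      MUaux.cluster_extract ht (hU.inter hWt) ⟨htU, htWt⟩ N₁
    have h1 : s n ∈ Wz := by
      rw [← hsen n]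
      exact hprod _ hn.1 _ (hN₁ n hnN)
    exact Set.disjoint_left.mp hdisj hn.2 h1
  have hstend : Filter.Tendsto s Filter.atTop (nhds z) :=
    MUaux.tendsto_of_unique_cluster hcc hsclusterz
  -- Step 3: every cluster point of `r` is `z`; hence `r` tends to `z`.
  have hrclusterz : ∀ v : T, (∀ N : ℕ, v ∈ closure (r '' Set.Ici N)) → v = z := by
    intro u hu
    by_contra hune
    have hemu : ∀ m : ℕ, e m * u = z := by
      intro m
      exact MUaux.cluster_map hu (continuous_mul_left (e m)) (m + 1)
        (fun n hn => her m n (by omega))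
    have hzu : z * u = z := by
      have h1 : Filter.Tendsto (fun m => e m * u) Filter.atTop (nhds (z * u)) :=
        hetend.mul_const u
      have h2 : Filter.Tendsto (fun m => e m * u) Filter.atTop (nhds z) := by
        simpa only [hemu] using (tendsto_const_nhds : Filter.Tendsto (fun _ : ℕ => z)
          Filter.atTop (nhds z))
      exact tendsto_nhds_unique h1 h2
    obtain ⟨Wu, Wz, hWu, hWz, huWu, hzWz, hdisj⟩ := t2_separation hune
    obtain ⟨U, V, hU, hV, hzU, huV, hprod⟩ :=
      MUaux.mul_cont_sep hWz (by rw [hzu]; exact hzWz)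
    obtain ⟨N₁, hN₁⟩ := (tendsto_atTop_nhds.mp hetend) U hzU hU
    obtain ⟨n, hnN, hn⟩ :=
      MUaux.cluster_extract hu (hV.inter hWu) ⟨huV, huWu⟩ N₁
    have h1 : r n ∈ Wz := by
      rw [← hern n]
      exact hprod _ (hN₁ n hnN) _ hn.1
    exact Set.disjoint_left.mp hdisj hn.2 h1
  have hrtend : Filter.Tendsto r Filter.atTop (nhds z) :=
    MUaux.tendsto_of_unique_cluster hcc hrclusterz
  -- Step 4: conclude `E = z * z = z`, contradiction with injectivity.
  have h1 : Filter.Tendsto (fun n => s n * r n) Filter.atTop (nhds (z * z)) :=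
    hstend.mul hrtend
  have h2 : Filter.Tendsto (fun n => s n * r n) Filter.atTop (nhds E) := by
    simpa only [hsr] using (tendsto_const_nhds : Filter.Tendsto (fun _ : ℕ => E)
      Filter.atTop (nhds E))
  have hzzE : E = z * z := tendsto_nhds_unique h2 h1
  have hzzz : z * z = z := by rw [hz, ← hf, mu_none_none]
  exact hEz (by rw [hzzE, hzzz])
end

section
/- Let X be an infinite set (type), n a positive integer, and T a countably compact topological semigroup. Then there is no injective semigroup homomorphism from the symmetric inverse semigroup of finite transformations of rank ≤ n, I_λ^n (λ = |X|), into T. -/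
open scoped Classical

universe u v

/-- `f : X → Option X` is a partial bijection: injective where defined. -/
def IsPB {X : Type u} (f : X → Option X) : Prop :=
  ∀ ⦃a b c : X⦄, f a = some c → f b = some c → a = b

/-- The domain of a partial map `X → Option X`. -/
def pdom {X : Type u} (f : X → Option X) : Set X := {x | f x ≠ none}

/-- The symmetric inverse semigroup `I_λ^n` of finite partial bijections of `X`
of rank ≤ n: partial bijections whose domain has at most `n` elements.
The empty transformation (the constant `none` map) is its zero. -/
def FinPB (X : Type u) (n : ℕ) : Type u :=
  {f : X → Option X // IsPB f ∧ (pdom f).Finite ∧ (pdom f).ncard ≤ n}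

namespace FinPB

variable {X : Type u} {n : ℕ}

/-- composition of partial maps, `x(fg) = (xf)g` -/
noncomputable def comp (f g : FinPB X n) : FinPB X n := by
  refine ⟨fun x => (f.1 x).bind g.1, ?_, ?_, ?_⟩
  · rintro a b c h1 h2
    obtain ⟨u, hu, hu'⟩ := Option.bind_eq_some_iff.mp h1
    obtain ⟨v, hv, hv'⟩ := Option.bind_eq_some_iff.mp h2
    have : u = v := g.2.1 hu' hv'
    subst this
    exact f.2.1 hu hv
  · refine f.2.2.1.subset ?_
    intro x hx
    simp only [pdom, Set.mem_setOf_eq] at hx ⊢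
    intro h
    exact hx (by rw [h]; rfl)
  · refine le_trans (Set.ncard_le_ncard ?_ f.2.2.1) f.2.2.2
    intro x hx
    simp only [pdom, Set.mem_setOf_eq] at hx ⊢
    intro h
    exact hx (by rw [h]; rfl)

noncomputable instance : Semigroup (FinPB X n) where
  mul := comp
  mul_assoc f g h := by
    show comp (comp f g) h = comp f (comp g h)
    apply Subtype.ext
    funext x
    show ((f.1 x).bind g.1).bind h.1 = (f.1 x).bind fun a => (g.1 a).bind h.1
    cases f.1 x <;> rfl

end FinPB


section AuxAlg

variable {X : Type u} {n : ℕ}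

/-- The rank-one partial bijection `u ↦ v`. -/
noncomputable def pbSingle (hn : 0 < n) (u v : X) : FinPB X n := by
  refine ⟨fun w => if w = u then some v else none, ?_, ?_, ?_⟩
  · intro a b c ha hb
    by_cases hau : a = u
    · by_cases hbu : b = u
      · rw [hau, hbu]
      · simp only [hbu, if_false] at hb
        exact absurd hb (by simp)
    · simp only [hau, if_false] at ha
      exact absurd ha (by simp)
  · refine Set.Finite.subset (Set.finite_singleton u) ?_
    intro w hw
    simp only [pdom, Set.mem_setOf_eq] at hw
    by_contra hwu
    simp only [Set.mem_singleton_iff] at hwu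
    simp only [hwu, if_false] at hw
    exact hw rfl
  · have hsub : pdom (fun w => if w = u then some v else none) ⊆ {u} := by
      intro w hw
      simp only [pdom, Set.mem_setOf_eq] at hw
      by_contra hwu
      simp only [Set.mem_singleton_iff] at hwu
      simp only [hwu, if_false] at hw
      exact hw rfl
    calc (pdom fun w => if w = u then some v else none).ncard
        ≤ ({u} : Set X).ncard := Set.ncard_le_ncard hsub (Set.finite_singleton u)
      _ = 1 := Set.ncard_singleton u
      _ ≤ n := hn

/-- The zero (empty) transformation. -/
noncomputable def pbZero : FinPB X n :=
  ⟨fun _ => none, fun a b c ha => absurd ha (by simp), by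
    convert Set.finite_empty
    simp [pdom], by
    have : pdom (fun _ : X => (none : Option X)) = ∅ := by
      ext w; simp [pdom]
    simp [this]⟩

lemma pbSingle_mul_same (hn : 0 < n) (u v w : X) :
    pbSingle (X := X) hn u v * pbSingle hn v w = pbSingle hn u w := by
  apply Subtype.ext
  funext a
  show ((if a = u then some v else none).bind fun b => if b = v then some w else none)
      = (if a = u then some w else none)
  by_cases h : a = u
  · simp [h]
  · simp [h]

lemma pbSingle_mul_ne (hn : 0 < n) (u w : X) {v v' : X} (hvv : v ≠ v') :
    pbSingle (X := X) hn u v * pbSingle hn v' w = pbZero := by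
  apply Subtype.ext
  funext a
  show ((if a = u then some v else none).bind fun b => if b = v' then some w else none)
      = (none : Option X)
  by_cases h : a = u
  · simp [h, hvv]
  · simp [h]

lemma pbZero_mul (g : FinPB X n) : (pbZero : FinPB X n) * g = pbZero := by
  apply Subtype.ext
  funext a
  rfl

lemma mul_pbZero (g : FinPB X n) : g * (pbZero : FinPB X n) = pbZero := by
  apply Subtype.ext
  funext a
  show (g.1 a).bind (fun _ => none) = none
  cases g.1 a <;> rfl

lemma pbSingle_ne_pbZero (hn : 0 < n) (u v : X) :
    pbSingle (X := X) hn u v ≠ pbZero := by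
  intro h
  have h1 : (pbSingle (X := X) hn u v).1 u = (pbZero (X := X) (n := n)).1 u := by rw [h]
  have h2 : (if u = u then some v else none) = (none : Option X) := h1
  simp at h2

end AuxAlg

section AuxLemmas

universe w

open Set

/-- In a space satisfying the countable-cover compactness condition, every sequence
has a cluster point. -/
lemma exists_cluster_point {T : Type w} [TopologicalSpace T]
    (hcc : ∀ U : ℕ → Set T, (∀ i, IsOpen (U i)) → (⋃ i, U i) = Set.univ →
      ∃ t : Finset ℕ, (⋃ i ∈ t, U i) = Set.univ) (y : ℕ → T) :
    ∃ t : T, ∀ U : Set T, IsOpen U → t ∈ U → ∀ m : ℕ, ∃ k, m ≤ k ∧ y k ∈ U := by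
  by_contra h
  push_neg at h
  have hUopen : ∀ i : ℕ, IsOpen (closure (y '' {k | i ≤ k}))ᶜ :=
    fun i => isClosed_closure.isOpen_compl
  have hcover : (⋃ i, (closure (y '' {k | i ≤ k}))ᶜ) = Set.univ := by
    apply Set.eq_univ_of_forall
    intro t
    obtain ⟨U, hUo, htU, m, hm⟩ := h t
    refine Set.mem_iUnion.mpr ⟨m, ?_⟩
    intro hmem
    rcases mem_closure_iff.mp hmem U hUo htU with ⟨w, hwU, hwim⟩
    obtain ⟨k, hk, rfl⟩ := hwim
    exact hm k hk hwU
  obtain ⟨tf, htf⟩ := hcc _ hUopen hcover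
  have hyS : y (tf.sup id) ∈ ⋃ i ∈ tf, (closure (y '' {k | i ≤ k}))ᶜ :=
    htf ▸ Set.mem_univ _
  rw [Set.mem_iUnion₂] at hyS
  obtain ⟨i, hi, hyi⟩ := hyS
  exact hyi (subset_closure ⟨tf.sup id, by simpa using Finset.le_sup (f := id) hi, rfl⟩)

/-- Joint continuity of multiplication, in open-sets form. -/
lemma mul_cont_at {T : Type w} [TopologicalSpace T] [Mul T] [ContinuousMul T]
    (a b : T) (W : Set T) (hW : IsOpen W) (hab : a * b ∈ W) :
    ∃ U V : Set T, IsOpen U ∧ IsOpen V ∧ a ∈ U ∧ b ∈ V ∧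
      ∀ p ∈ U, ∀ q ∈ V, p * q ∈ W := by
  have hpre : IsOpen {p : T × T | p.1 * p.2 ∈ W} := IsOpen.preimage continuous_mul hW
  obtain ⟨U, V, hU, hV, haU, hbV, hsub⟩ := isOpen_prod_iff.mp hpre a b hab
  exact ⟨U, V, hU, hV, haU, hbV, fun p hp q hq => hsub (Set.mk_mem_prod hp hq)⟩

end AuxLemmas

/-- For an infinite set `X` and positive `n`, the symmetric inverse semigroup
`I_λ^n` of finite partial bijections of rank ≤ n does not embed into a countably compact
topological semigroup. -/
theorem no_embedding_finPB_into_countablyCompact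
    {X : Type u} [Infinite X] (n : ℕ) (hn : 0 < n)
    {T : Type v} [Semigroup T] [TopologicalSpace T] [T2Space T] [ContinuousMul T]
    (hcc : ∀ U : ℕ → Set T, (∀ i, IsOpen (U i)) → (⋃ i, U i) = Set.univ →
      ∃ t : Finset ℕ, (⋃ i ∈ t, U i) = Set.univ) :
    ¬ ∃ f : FinPB X n → T,
        (∀ a b : FinPB X n, f (a * b) = f a * f b) ∧ Function.Injective f := by
  rintro ⟨f, hmul, hinj⟩
  -- an injective sequence of points of `X`
  obtain ⟨x⟩ : Nonempty (ℕ ↪ X) := ⟨Infinite.natEmbedding X⟩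
  -- the image of the zero transformation
  set z : T := f pbZero with hz
  -- a point `q` all of whose neighborhoods contain `z` equals `z`   (T1)
  have eq_z : ∀ q : T, (∀ W : Set T, IsOpen W → q ∈ W → z ∈ W) → q = z := by
    intro q hq
    by_contra hqz
    have h1 := hq {z}ᶜ isOpen_compl_singleton (by simpa using hqz)
    simp at h1
  -- the set of idempotents of `T` is closed
  have hidcl : IsClosed {w : T | w * w = w} :=
    isClosed_eq (continuous_id.mul continuous_id) continuous_id
  -- STEP 1 : the images of the idempotents `id_{x k}` converge to `z`.
  have hEconv : ∀ W : Set T, IsOpen W → z ∈ W →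
      ∃ N : ℕ, ∀ k, N ≤ k → f (pbSingle hn (x k) (x k)) ∈ W := by
    intro W hW hzW
    by_contra hbad
    push_neg at hbad
    have hMinf : {k : ℕ | f (pbSingle hn (x k) (x k)) ∉ W}.Infinite := by
      by_contra hfin
      rw [Set.not_infinite] at hfin
      obtain ⟨b, hb⟩ := hfin.bddAbove
      obtain ⟨k, hkb, hk⟩ := hbad (b + 1)
      have := hb hk
      omega
    set g : ℕ → ℕ := Nat.nth (fun k => f (pbSingle hn (x k) (x k)) ∉ W) with hg
    have hgmem : ∀ i, f (pbSingle hn (x (g i)) (x (g i))) ∉ W :=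
      fun i => Nat.nth_mem_of_infinite hMinf i
    have hgmono : StrictMono g := Nat.nth_strictMono hMinf
    obtain ⟨t, ht⟩ := exists_cluster_point hcc (fun i => f (pbSingle hn (x (g i)) (x (g i))))
    have htc : t ∈ closure (Set.range fun i => f (pbSingle hn (x (g i)) (x (g i)))) := by
      rw [mem_closure_iff]
      intro o ho hto
      obtain ⟨k, _, hk⟩ := ht o ho hto 0
      exact ⟨_, hk, Set.mem_range_self k⟩
    -- t is idempotent
    have hidem_t : t * t = t := by
      have hsub : (Set.range fun i => f (pbSingle hn (x (g i)) (x (g i)))) ⊆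
          {w : T | w * w = w} := by
        rintro _ ⟨i, rfl⟩
        show f (pbSingle hn (x (g i)) (x (g i))) * f (pbSingle hn (x (g i)) (x (g i)))
            = f (pbSingle hn (x (g i)) (x (g i)))
        rw [← hmul, pbSingle_mul_same]
      exact closure_minimal hsub hidcl htc
    -- t * t = z
    have htz : t * t = z := by
      apply eq_z
      intro W' hW' htt
      obtain ⟨U, V, hU, hV, htU, htV, hprod⟩ := mul_cont_at t t W' hW' htt
      obtain ⟨i, _, hiU⟩ := ht U hU htU 0
      obtain ⟨j, hj, hjV⟩ := ht V hV htV (i + 1)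
      have hne : x (g i) ≠ x (g j) := by
        intro hcon
        have h1 : g i = g j := x.injective hcon
        have h2 : i = j := hgmono.injective h1
        omega
      have hzprod : f (pbSingle hn (x (g i)) (x (g i))) * f (pbSingle hn (x (g j)) (x (g j)))
          = z := by
        rw [← hmul, pbSingle_mul_ne hn _ _ hne, hz]
      have := hprod _ hiU _ hjV
      rwa [hzprod] at this
    have htz' : t = z := by rw [← hidem_t, htz]
    have htW : t ∉ W := by
      have hsub : (Set.range fun i => f (pbSingle hn (x (g i)) (x (g i)))) ⊆ Wᶜ := by
        rintro _ ⟨i, rfl⟩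
        exact hgmem i
      exact closure_minimal hsub (isClosed_compl_iff.mpr hW) htc
    exact htW (htz' ▸ hzW)
  -- STEP 2 : the images of `b k : x k ↦ x 0` converge to `z`.
  have hBconv : ∀ W : Set T, IsOpen W → z ∈ W →
      ∃ N : ℕ, ∀ k, N ≤ k → f (pbSingle hn (x k) (x 0)) ∈ W := by
    intro W hW hzW
    by_contra hbad
    push_neg at hbad
    have hMinf : {k : ℕ | f (pbSingle hn (x k) (x 0)) ∉ W}.Infinite := by
      by_contra hfin
      rw [Set.not_infinite] at hfin
      obtain ⟨b, hb⟩ := hfin.bddAbove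
      obtain ⟨k, hkb, hk⟩ := hbad (b + 1)
      have := hb hk
      omega
    set g : ℕ → ℕ := Nat.nth (fun k => f (pbSingle hn (x k) (x 0)) ∉ W) with hg
    have hgmem : ∀ i, f (pbSingle hn (x (g i)) (x 0)) ∉ W :=
      fun i => Nat.nth_mem_of_infinite hMinf i
    have hgmono : StrictMono g := Nat.nth_strictMono hMinf
    have hgle : ∀ i, i ≤ g i := by
      intro i
      induction i with
      | zero => exact Nat.zero_le _
      | succ k ih => exact Nat.succ_le_of_lt (lt_of_le_of_lt ih (hgmono (Nat.lt_succ_self k)))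
    obtain ⟨s, hs⟩ := exists_cluster_point hcc (fun i => f (pbSingle hn (x (g i)) (x 0)))
    have hsc : s ∈ closure (Set.range fun i => f (pbSingle hn (x (g i)) (x 0))) := by
      rw [mem_closure_iff]
      intro o ho hso
      obtain ⟨k, _, hk⟩ := hs o ho hso 0
      exact ⟨_, hk, Set.mem_range_self k⟩
    -- z * s = z
    have hzs : z * s = z := by
      have hcont : Continuous fun w : T => z * w := continuous_const.mul continuous_id
      have himg : (fun w : T => z * w) ''
          (Set.range fun i => f (pbSingle hn (x (g i)) (x 0))) ⊆ {z} := by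
        rintro _ ⟨_, ⟨i, rfl⟩, rfl⟩
        show z * f (pbSingle hn (x (g i)) (x 0)) ∈ ({z} : Set T)
        rw [Set.mem_singleton_iff, hz, ← hmul, pbZero_mul]
      have hmem : z * s ∈ closure ((fun w : T => z * w) ''
          (Set.range fun i => f (pbSingle hn (x (g i)) (x 0)))) :=
        image_closure_subset_closure_image hcont ⟨s, hsc, rfl⟩
      exact (closure_minimal himg isClosed_singleton) hmem
    obtain ⟨U, V, hU, hV, hzU, hsV, hprod⟩ := mul_cont_at z s W hW (by rw [hzs]; exact hzW)
    obtain ⟨N, hN⟩ := hEconv U hU hzU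
    obtain ⟨i, hiN, hiV⟩ := hs V hV hsV N
    have hgiN : N ≤ g i := le_trans hiN (hgle i)
    have hEU : f (pbSingle hn (x (g i)) (x (g i))) ∈ U := hN _ hgiN
    have hkey : f (pbSingle hn (x (g i)) (x (g i))) * f (pbSingle hn (x (g i)) (x 0))
        = f (pbSingle hn (x (g i)) (x 0)) := by
      rw [← hmul, pbSingle_mul_same]
    have hmem := hprod _ hEU _ hiV
    rw [hkey] at hmem
    exact hgmem i hmem
  -- STEP 3 : the final contradiction, using `a k : x 0 ↦ x k`.
  obtain ⟨s, hs⟩ := exists_cluster_point hcc (fun k => f (pbSingle hn (x 0) (x k)))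
  have hsc : s ∈ closure (Set.range fun k => f (pbSingle hn (x 0) (x k))) := by
    rw [mem_closure_iff]
    intro o ho hso
    obtain ⟨k, _, hk⟩ := hs o ho hso 0
    exact ⟨_, hk, Set.mem_range_self k⟩
  have hsz : s * z = z := by
    have hcont : Continuous fun w : T => w * z := continuous_id.mul continuous_const
    have himg : (fun w : T => w * z) ''
        (Set.range fun k => f (pbSingle hn (x 0) (x k))) ⊆ {z} := by
      rintro _ ⟨_, ⟨k, rfl⟩, rfl⟩
      show f (pbSingle hn (x 0) (x k)) * z ∈ ({z} : Set T)
      rw [Set.mem_singleton_iff, hz, ← hmul, mul_pbZero]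
    have hmem : s * z ∈ closure ((fun w : T => w * z) ''
        (Set.range fun k => f (pbSingle hn (x 0) (x k)))) :=
      image_closure_subset_closure_image hcont ⟨s, hsc, rfl⟩
    exact (closure_minimal himg isClosed_singleton) hmem
  have hne : z ≠ f (pbSingle hn (x 0) (x 0)) := by
    intro hcon
    exact pbSingle_ne_pbZero hn (x 0) (x 0) (hinj (hz ▸ hcon)).symm
  have hW0 : IsOpen ({f (pbSingle hn (x 0) (x 0))}ᶜ : Set T) := isOpen_compl_singleton
  have hzW0 : z ∈ ({f (pbSingle hn (x 0) (x 0))}ᶜ : Set T) := by simpa using hne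
  obtain ⟨U, V, hU, hV, hsU, hzV, hprod⟩ :=
    mul_cont_at s z ({f (pbSingle hn (x 0) (x 0))}ᶜ) hW0 (by rw [hsz]; exact hzW0)
  obtain ⟨N, hN⟩ := hBconv V hV hzV
  obtain ⟨k, hkN, hkU⟩ := hs U hU hsU N
  have hkey : f (pbSingle hn (x 0) (x k)) * f (pbSingle hn (x k) (x 0))
      = f (pbSingle hn (x 0) (x 0)) := by
    rw [← hmul, pbSingle_mul_same]
  have hmem := hprod _ hkU _ (hN k hkN)
  rw [hkey] at hmem
  exact hmem rfl
end

section
/- Let X be an infinite set (type), n a positive integer, and T a countably compact topological semigroup. Then every semigroup homomorphism h from the symmetric inverse semigroup of finite transformations of rank ≤ n, I_λ^n (λ = |X|), into T is annihilating, i.e., h is a constant map. -/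
open scoped Classical

universe u v

namespace Aux9

variable {X : Type u} {n : ℕ}

/-- The zero (empty) partial bijection. -/
noncomputable def zeroPB (X : Type u) (n : ℕ) : FinPB X n :=
  ⟨fun _ => none, by intro a b c h1 _; exact absurd h1 (by simp), by
    have hp : pdom (fun _ : X => (none : Option X)) = ∅ := by
      ext x; simp [pdom]
    constructor
    · rw [hp]; exact Set.finite_empty
    · rw [hp]; simp⟩

lemma ext' {a b : FinPB X n} (hab : ∀ x, a.val x = b.val x) : a = b :=
  Subtype.ext (funext hab)

lemma mul_val (a b : FinPB X n) (x : X) : (a * b).val x = (a.val x).bind b.val := rfl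

lemma zeroPB_mul (a : FinPB X n) : zeroPB X n * a = zeroPB X n :=
  ext' fun _ => rfl

lemma mul_zeroPB (a : FinPB X n) : a * zeroPB X n = zeroPB X n :=
  ext' fun x => by
    show (a.val x).bind _ = none
    cases a.val x <;> rfl

/-- a partial map sending `a t ↦ b t` for `t < m`. -/
noncomputable def pmap (a b : ℕ → X) (m : ℕ) : X → Option X := fun x =>
  if hx : ∃ t, t < m ∧ a t = x then some (b (Classical.choose hx)) else none

lemma pmap_at {a b : ℕ → X} {m : ℕ}
    (aInj : ∀ t t', t < m → t' < m → a t = a t' → t = t') {t : ℕ} (ht : t < m) :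
    pmap a b m (a t) = some (b t) := by
  have hx : ∃ t', t' < m ∧ a t' = a t := ⟨t, ht, rfl⟩
  have hsp := Classical.choose_spec hx
  have hch : Classical.choose hx = t := aInj _ _ hsp.1 ht hsp.2
  unfold pmap
  rw [dif_pos hx, hch]

lemma pmap_none {a b : ℕ → X} {m : ℕ} {x : X} (hx : ¬ ∃ t, t < m ∧ a t = x) :
    pmap a b m x = none := by
  unfold pmap
  rw [dif_neg hx]

lemma pmap_some {a b : ℕ → X} {m : ℕ} {x c : X} (h : pmap a b m x = some c) :
    ∃ t, t < m ∧ a t = x ∧ b t = c := by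
  unfold pmap at h
  split at h
  · next hx =>
    exact ⟨Classical.choose hx, (Classical.choose_spec hx).1, (Classical.choose_spec hx).2,
      Option.some.inj h⟩
  · exact absurd h (by simp)

lemma pmap_pdom_subset (a b : ℕ → X) (m : ℕ) :
    pdom (pmap a b m) ⊆ ↑((Finset.range m).image a) := by
  intro x hx
  by_cases hex : ∃ t, t < m ∧ a t = x
  · obtain ⟨t, ht, rfl⟩ := hex
    simp only [Finset.coe_image, Set.mem_image, Finset.mem_coe, Finset.mem_range]
    exact ⟨t, ht, rfl⟩
  · exact absurd (pmap_none (b := b) hex) hx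

/-- An element of `FinPB X n` out of `pmap`. -/
noncomputable def mk (a b : ℕ → X) (m : ℕ) (hm : m ≤ n)
    (aInj : ∀ t t', t < m → t' < m → a t = a t' → t = t')
    (bInj : ∀ t t', t < m → t' < m → b t = b t' → t = t') : FinPB X n := by
  refine ⟨pmap a b m, ?_, ?_, ?_⟩
  · intro x y c hx hy
    obtain ⟨t, ht, hax, hbc⟩ := pmap_some hx
    obtain ⟨t', ht', hay, hbc'⟩ := pmap_some hy
    have htt : t = t' := bInj _ _ ht ht' (hbc.trans hbc'.symm)
    rw [← hax, ← hay, htt]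
  · exact Set.Finite.subset (Finset.finite_toSet _) (pmap_pdom_subset a b m)
  · calc (pdom (pmap a b m)).ncard
        ≤ (↑((Finset.range m).image a) : Set X).ncard :=
          Set.ncard_le_ncard (pmap_pdom_subset a b m) (Finset.finite_toSet _)
      _ = ((Finset.range m).image a).card := Set.ncard_coe_finset _
      _ ≤ (Finset.range m).card := Finset.card_image_le
      _ = m := Finset.card_range m
      _ ≤ n := hm

lemma mk_val (a b : ℕ → X) (m : ℕ) (hm : m ≤ n) (aInj) (bInj) :
    (mk (n := n) a b m hm aInj bInj).val = pmap a b m := rfl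

/-- matrix units -/
noncomputable def sig (E : ℕ × ℕ ↪ X) (K : ℕ) (hK : K ≤ n) (i j : ℕ) : FinPB X n :=
  mk (fun t => E (i, t)) (fun t => E (j, t)) K hK
    (fun t t' _ _ hE => by
      have := E.injective hE; simpa using this)
    (fun t t' _ _ hE => by
      have := E.injective hE; simpa using this)

lemma sig_aInj (E : ℕ × ℕ ↪ X) (K : ℕ) (i : ℕ) :
    ∀ t t', t < K → t' < K → E (i, t) = E (i, t') → t = t' :=
  fun t t' _ _ hE => by have := E.injective hE; simpa using this

lemma sig_mul_eq (E : ℕ × ℕ ↪ X) (K : ℕ) (hK : K ≤ n) (i j l : ℕ) :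
    sig (n := n) E K hK i j * sig E K hK j l = sig E K hK i l := by
  apply ext'
  intro x
  rw [mul_val]
  show (pmap (fun t => E (i, t)) (fun t => E (j, t)) K x).bind
      (pmap (fun t => E (j, t)) (fun t => E (l, t)) K)
    = pmap (fun t => E (i, t)) (fun t => E (l, t)) K x
  by_cases hx : ∃ t, t < K ∧ E (i, t) = x
  · obtain ⟨t, ht, rfl⟩ := hx
    rw [pmap_at (sig_aInj E K i) ht]
    show pmap (fun t => E (j, t)) (fun t => E (l, t)) K (E (j, t)) = _
    rw [pmap_at (sig_aInj E K j) ht, pmap_at (sig_aInj E K i) ht]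
  · rw [pmap_none (b := fun t => E (j, t)) hx, pmap_none (b := fun t => E (l, t)) hx]
    rfl

lemma sig_mul_ne (E : ℕ × ℕ ↪ X) (K : ℕ) (hK : K ≤ n) (i j k l : ℕ) (hjk : j ≠ k) :
    sig (n := n) E K hK i j * sig E K hK k l = zeroPB X n := by
  apply ext'
  intro x
  rw [mul_val]
  show (pmap (fun t => E (i, t)) (fun t => E (j, t)) K x).bind
      (pmap (fun t => E (k, t)) (fun t => E (l, t)) K)
    = (zeroPB X n).val x
  by_cases hx : ∃ t, t < K ∧ E (i, t) = x
  · obtain ⟨t, ht, rfl⟩ := hx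
    rw [pmap_at (sig_aInj E K i) ht]
    show pmap (fun t => E (k, t)) (fun t => E (l, t)) K (E (j, t)) = _
    have hno : ¬ ∃ t', t' < K ∧ E (k, t') = E (j, t) := by
      rintro ⟨t', _, hE⟩
      have h2 : k = j := congrArg Prod.fst (E.injective hE)
      exact hjk h2.symm
    rw [pmap_none hno]
    rfl
  · rw [pmap_none (b := fun t => E (j, t)) hx]
    rfl

/-- decomposition `f = u * sig 0 0 * v` -/
lemma decomp (E : ℕ × ℕ ↪ X) (K : ℕ) (hK : K ≤ n) (f : FinPB X n)
    (hf : (pdom f.val).ncard ≤ K) :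
    ∃ u v : FinPB X n, u * sig E K hK 0 0 * v = f := by
  classical
  have hfin : (pdom f.val).Finite := f.2.2.1
  set s : Finset X := hfin.toFinset with hs
  have hscoe : (↑s : Set X) = pdom f.val := hfin.coe_toFinset
  have hscard : s.card ≤ K := by
    have h1 : (↑s : Set X).ncard = s.card := Set.ncard_coe_finset s
    rw [hscoe] at h1
    omega
  set L := s.toList with hL
  have hlen : L.length = s.card := Finset.length_toList s
  have hnd : L.Nodup := Finset.nodup_toList s
  set r := s.card with hr
  set aD : ℕ → X := fun t => if ht : t < L.length then L.get ⟨t, ht⟩ else E (0, 0) with haD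
  have haMem : ∀ t, t < r → aD t ∈ pdom f.val := by
    intro t ht
    have ht' : t < L.length := by omega
    have h1 : L.get ⟨t, ht'⟩ ∈ L := List.get_mem _ _
    have h2 : L.get ⟨t, ht'⟩ ∈ s := Finset.mem_toList.mp h1
    have h3 : aD t = L.get ⟨t, ht'⟩ := by rw [haD]; simp [dif_pos ht']
    rw [h3, ← hscoe]
    exact h2
  have haInj : ∀ t t', t < r → t' < r → aD t = aD t' → t = t' := by
    intro t t' ht ht' heq
    have ht1 : t < L.length := by omega
    have ht2 : t' < L.length := by omega
    have h3 : aD t = L.get ⟨t, ht1⟩ := by rw [haD]; simp [dif_pos ht1]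
    have h4 : aD t' = L.get ⟨t', ht2⟩ := by rw [haD]; simp [dif_pos ht2]
    rw [h3, h4] at heq
    have := (hnd.get_inj_iff).mp heq
    exact Fin.val_eq_of_eq this
  have haSurj : ∀ x ∈ pdom f.val, ∃ t, t < r ∧ aD t = x := by
    intro x hx
    have h1 : x ∈ s := by rw [← hscoe] at hx; exact hx
    have h2 : x ∈ L := Finset.mem_toList.mpr h1
    obtain ⟨⟨i, hi⟩, hgi⟩ := List.mem_iff_get.mp h2
    refine ⟨i, by omega, ?_⟩
    rw [haD]; simp only [dif_pos hi]; exact hgi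
  set bV : ℕ → X := fun t => (f.val (aD t)).getD (E (0, 0)) with hbVd
  have hbV : ∀ t, t < r → f.val (aD t) = some (bV t) := by
    intro t ht
    have hmem := haMem t ht
    cases hc : f.val (aD t) with
    | none => exact absurd hc hmem
    | some c => rw [hbVd]; simp [hc]
  have hbInj : ∀ t t', t < r → t' < r → bV t = bV t' → t = t' := by
    intro t t' ht ht' hbb
    have h1 := hbV t ht
    have h2 := hbV t' ht'
    rw [hbb] at h1
    exact haInj _ _ ht ht' (f.2.1 h1 h2)
  have hrn : r ≤ n := le_trans hscard hK
  refine ⟨mk aD (fun t => E (0, t)) r hrn haInj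
      (fun t t' _ _ hE => by have := E.injective hE; simpa using this),
    mk (fun t => E (0, t)) bV r hrn
      (fun t t' _ _ hE => by have := E.injective hE; simpa using this) hbInj,
    ext' ?_⟩
  intro x
  rw [mul_val, mul_val]
  show ((pmap aD (fun t => E (0, t)) r x).bind
      (pmap (fun t => E (0, t)) (fun t => E (0, t)) K)).bind (pmap (fun t => E (0, t)) bV r)
    = f.val x
  by_cases hx : x ∈ pdom f.val
  · obtain ⟨t, ht, rfl⟩ := haSurj x hx
    rw [pmap_at haInj ht]
    show (pmap (fun t => E (0, t)) (fun t => E (0, t)) K (E (0, t))).bind _ = _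
    rw [pmap_at (sig_aInj E K 0) (by omega : t < K)]
    show pmap (fun t => E (0, t)) bV r (E (0, t)) = _
    rw [pmap_at (fun t t' _ _ hE => by have := E.injective hE; simpa using this) ht]
    exact (hbV t ht).symm
  · have h0 : f.val x = none := by
      by_contra hne
      exact hx hne
    have hno : ¬ ∃ t, t < r ∧ aD t = x := by
      rintro ⟨t, ht, hat⟩
      exact hx (hat ▸ haMem t ht)
    rw [pmap_none hno, h0]
    rfl

end Aux9

open Aux9 in
/-- Every semigroup homomorphism from `I_λ^n` (`X` infinite, `n` positive)
into a countably compact topological semigroup is annihilating (constant). -/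
theorem hom_finPB_into_countablyCompact_annihilating
    {X : Type u} [Infinite X] (n : ℕ) (hn : 0 < n)
    {T : Type v} [Semigroup T] [TopologicalSpace T] [T2Space T] [ContinuousMul T]
    (hcc : ∀ U : ℕ → Set T, (∀ i, IsOpen (U i)) → (⋃ i, U i) = Set.univ →
      ∃ t : Finset ℕ, (⋃ i ∈ t, U i) = Set.univ) :
    ∀ h : FinPB X n → T,
      (∀ a b : FinPB X n, h (a * b) = h a * h b) →
      ∃ c : T, ∀ x : FinPB X n, h x = c := by
  intro h hmul
  by_cases hconst : ∀ a b : FinPB X n, h a = h b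
  · exact ⟨h (zeroPB X n), fun x => hconst x (zeroPB X n)⟩
  exfalso
  classical
  -- a countable family of "matrix unit" elements of FinPB X n
  set E : ℕ × ℕ ↪ X :=
    (Denumerable.eqv (ℕ × ℕ)).toEmbedding.trans (Infinite.natEmbedding X) with hE
  -- h applied to the matrix unit σ i j
  set S : ℕ → ℕ → T := fun i j => h (sig E n le_rfl i j) with hSdef
  set z : T := h (zeroPB X n) with hzdef
  -- product laws
  have hS_eq : ∀ i j l : ℕ, S i j * S j l = S i l := by
    intro i j l
    rw [hSdef]
    show h _ * h _ = h _
    rw [← hmul, sig_mul_eq]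
  have hS_ne : ∀ i j k l : ℕ, j ≠ k → S i j * S k l = z := by
    intro i j k l hjk
    rw [hSdef, hzdef]
    show h _ * h _ = h _
    rw [← hmul, sig_mul_ne E n le_rfl i j k l hjk]
  have hzz : z * z = z := by
    rw [hzdef]
    show h _ * h _ = h _
    rw [← hmul, zeroPB_mul]
  -- h (σ 0 0) ≠ z
  have ht0 : S 0 0 ≠ z := by
    intro heq
    apply hconst
    have key : ∀ g : FinPB X n, h g = h (zeroPB X n) := by
      intro g
      obtain ⟨u, v, huv⟩ := decomp E n le_rfl g g.2.2.2
      have heq' : h (sig E n le_rfl 0 0) = h (zeroPB X n) := heq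
      calc h g = h (u * sig E n le_rfl 0 0 * v) := by rw [huv]
        _ = h (u * sig E n le_rfl 0 0) * h v := hmul _ _
        _ = h u * h (sig E n le_rfl 0 0) * h v := by rw [hmul u]
        _ = h u * h (zeroPB X n) * h v := by rw [heq']
        _ = h (u * zeroPB X n) * h v := by rw [hmul u]
        _ = h (u * zeroPB X n * v) := (hmul _ _).symm
        _ = h (zeroPB X n) := by rw [mul_zeroPB, zeroPB_mul]
    intro a b
    rw [key a, key b]
  -- cluster points of sequences, from countable compactness
  have cluster : ∀ d : ℕ → T, ∃ x : T, ∀ N : ℕ, x ∈ closure (d '' Set.Ici N) := by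
    intro d
    by_contra hcon
    push_neg at hcon
    have hcov : (⋃ N : ℕ, (closure (d '' Set.Ici N))ᶜ) = Set.univ := by
      ext y
      simp only [Set.mem_iUnion, Set.mem_compl_iff, Set.mem_univ, iff_true]
      exact hcon y
    obtain ⟨t, ht⟩ := hcc (fun N => (closure (d '' Set.Ici N))ᶜ)
      (fun N => isClosed_closure.isOpen_compl) hcov
    have hM : d (t.sup id) ∈ ⋃ i ∈ t, (closure (d '' Set.Ici i))ᶜ := by
      rw [ht]; trivial
    simp only [Set.mem_iUnion] at hM
    obtain ⟨i, hit, hmem⟩ := hM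
    exact hmem (subset_closure ⟨t.sup id, Finset.le_sup (f := id) hit, rfl⟩)
  -- right/left absorption by z on the closure of the range of h
  have absorbR : ∀ x ∈ closure (Set.range h), x * z = z := by
    intro x hx
    have hcl : IsClosed {y : T | y * z = z} := by
      have hset : {y : T | y * z = z} = (fun y => y * z) ⁻¹' {z} := by
        ext y; simp
      rw [hset]
      exact isClosed_singleton.preimage (continuous_mul_right _)
    have hsub : Set.range h ⊆ {y : T | y * z = z} := by
      rintro y ⟨a, rfl⟩
      show h a * z = z
      rw [hzdef]
      show h _ * h _ = h _
      rw [← hmul, mul_zeroPB]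
    exact closure_minimal hsub hcl hx
  have absorbL : ∀ x ∈ closure (Set.range h), z * x = z := by
    intro x hx
    have hcl : IsClosed {y : T | z * y = z} := by
      have hset : {y : T | z * y = z} = (fun y => z * y) ⁻¹' {z} := by
        ext y; simp
      rw [hset]
      exact isClosed_singleton.preimage (continuous_mul_left _)
    have hsub : Set.range h ⊆ {y : T | z * y = z} := by
      rintro y ⟨a, rfl⟩
      show z * h a = z
      rw [hzdef]
      show h _ * h _ = h _
      rw [← hmul, zeroPB_mul]
    exact closure_minimal hsub hcl hx
  -- D1 : each open neighborhood of z contains cofinitely many diagonal idempotents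
  have D1 : ∀ W : Set T, IsOpen W → z ∈ W → {m : ℕ | S m m ∉ W}.Finite := by
    intro W hWo hWz
    by_contra hfin
    have hinf : {m : ℕ | S m m ∉ W}.Infinite := hfin
    set g := Set.Infinite.natEmbedding _ hinf with hg
    set d : ℕ → T := fun m => S ((g m : ℕ)) ((g m : ℕ)) with hd
    obtain ⟨x, hx⟩ := cluster d
    have hmeet : ∀ (N : ℕ) (U : Set T), U ∈ nhds x → ∃ m, N ≤ m ∧ d m ∈ U := by
      intro N U hU
      obtain ⟨y, hyU, m, hm, hdm⟩ := (mem_closure_iff_nhds.mp (hx N)) U hU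
      exact ⟨m, hm, by rw [hdm]; exact hyU⟩
    have hxx : x * x = z := by
      by_contra hne
      have hmem : (x, x) ∈ (fun p : T × T => p.1 * p.2) ⁻¹' {z}ᶜ := hne
      have hop : IsOpen ((fun p : T × T => p.1 * p.2) ⁻¹' {z}ᶜ) :=
        (isClosed_singleton.isOpen_compl).preimage continuous_mul
      obtain ⟨U, hU, V, hV, hUV⟩ := mem_nhds_prod_iff.mp (hop.mem_nhds hmem)
      obtain ⟨m₀, -, hm₀⟩ := hmeet 0 U hU
      obtain ⟨m₁, hm₁ge, hm₁⟩ := hmeet (m₀ + 1) V hV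
      have hne' : ((g m₀ : ℕ)) ≠ ((g m₁ : ℕ)) := by
        intro hh
        have h1 : m₀ = m₁ := g.injective (Subtype.coe_injective hh)
        omega
      have hprod := hUV (Set.mk_mem_prod hm₀ hm₁)
      apply hprod
      show d m₀ * d m₁ ∈ {z}
      rw [Set.mem_singleton_iff]
      exact hS_ne _ _ _ _ hne'
    have hmem2 : (x, x) ∈ (fun p : T × T => p.1 * p.2) ⁻¹' W := by
      show x * x ∈ W
      rw [hxx]; exact hWz
    obtain ⟨U, hU, V, hV, hUV⟩ :=
      mem_nhds_prod_iff.mp (((hWo.preimage continuous_mul)).mem_nhds hmem2)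
    obtain ⟨m, -, hm⟩ := hmeet 0 (U ∩ V) (Filter.inter_mem hU hV)
    have hprod : d m * d m ∈ W := hUV (Set.mk_mem_prod hm.1 hm.2)
    have hdd : d m * d m = d m := hS_eq _ _ _
    rw [hdd] at hprod
    exact (g m).2 hprod
  -- D2 : each open neighborhood of z contains cofinitely many S 0 m
  have D2 : ∀ W : Set T, IsOpen W → z ∈ W → {m : ℕ | S 0 m ∉ W}.Finite := by
    intro W hWo hWz
    by_contra hfin
    have hinf : {m : ℕ | S 0 m ∉ W}.Infinite := hfin
    set g := Set.Infinite.natEmbedding _ hinf with hg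
    set d : ℕ → T := fun m => S 0 ((g m : ℕ)) with hd
    obtain ⟨x, hx⟩ := cluster d
    have hmeet : ∀ (N : ℕ) (U : Set T), U ∈ nhds x → ∃ m, N ≤ m ∧ d m ∈ U := by
      intro N U hU
      obtain ⟨y, hyU, m, hm, hdm⟩ := (mem_closure_iff_nhds.mp (hx N)) U hU
      exact ⟨m, hm, by rw [hdm]; exact hyU⟩
    have hxcl : x ∈ closure (Set.range h) := by
      refine closure_mono ?_ (hx 0)
      rintro y ⟨m, -, rfl⟩
      exact ⟨_, rfl⟩
    have hxz : x * z = z := absorbR x hxcl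
    have hmem : (x, z) ∈ (fun p : T × T => p.1 * p.2) ⁻¹' W := by
      show x * z ∈ W
      rw [hxz]; exact hWz
    obtain ⟨U, hU, V, hV, hUV⟩ :=
      mem_nhds_prod_iff.mp (((hWo.preimage continuous_mul)).mem_nhds hmem)
    obtain ⟨V', hV'sub, hV'o, hV'z⟩ := mem_nhds_iff.mp hV
    have hD1 := D1 V' hV'o hV'z
    have hpre : {m : ℕ | S ((g m : ℕ)) ((g m : ℕ)) ∉ V'}.Finite := by
      have hsub : {m : ℕ | S ((g m : ℕ)) ((g m : ℕ)) ∉ V'} ⊆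
          (fun m : ℕ => ((g m : ℕ))) ⁻¹' {k : ℕ | S k k ∉ V'} := fun m hm => hm
      refine Set.Finite.subset (Set.Finite.preimage ?_ hD1) hsub
      exact (Subtype.coe_injective.comp g.injective).injOn
    obtain ⟨M, hM⟩ := hpre.bddAbove
    obtain ⟨m, hmge, hmU⟩ := hmeet (M + 1) U hU
    have htm : S ((g m : ℕ)) ((g m : ℕ)) ∈ V' := by
      by_contra hc
      have := hM hc
      omega
    have hprod : d m * S ((g m : ℕ)) ((g m : ℕ)) ∈ W := hUV (Set.mk_mem_prod hmU (hV'sub htm))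
    have heq2 : d m * S ((g m : ℕ)) ((g m : ℕ)) = d m := hS_eq _ _ _
    rw [heq2] at hprod
    exact (g m).2 hprod
  -- D3 : each open neighborhood of z contains cofinitely many S m 0
  have D3 : ∀ W : Set T, IsOpen W → z ∈ W → {m : ℕ | S m 0 ∉ W}.Finite := by
    intro W hWo hWz
    by_contra hfin
    have hinf : {m : ℕ | S m 0 ∉ W}.Infinite := hfin
    set g := Set.Infinite.natEmbedding _ hinf with hg
    set d : ℕ → T := fun m => S ((g m : ℕ)) 0 with hd
    obtain ⟨x, hx⟩ := cluster d
    have hmeet : ∀ (N : ℕ) (U : Set T), U ∈ nhds x → ∃ m, N ≤ m ∧ d m ∈ U := by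
      intro N U hU
      obtain ⟨y, hyU, m, hm, hdm⟩ := (mem_closure_iff_nhds.mp (hx N)) U hU
      exact ⟨m, hm, by rw [hdm]; exact hyU⟩
    have hxcl : x ∈ closure (Set.range h) := by
      refine closure_mono ?_ (hx 0)
      rintro y ⟨m, -, rfl⟩
      exact ⟨_, rfl⟩
    have hxz : z * x = z := absorbL x hxcl
    have hmem : (z, x) ∈ (fun p : T × T => p.1 * p.2) ⁻¹' W := by
      show z * x ∈ W
      rw [hxz]; exact hWz
    obtain ⟨U, hU, V, hV, hUV⟩ :=
      mem_nhds_prod_iff.mp (((hWo.preimage continuous_mul)).mem_nhds hmem)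
    obtain ⟨U', hU'sub, hU'o, hU'z⟩ := mem_nhds_iff.mp hU
    have hD1 := D1 U' hU'o hU'z
    have hpre : {m : ℕ | S ((g m : ℕ)) ((g m : ℕ)) ∉ U'}.Finite := by
      have hsub : {m : ℕ | S ((g m : ℕ)) ((g m : ℕ)) ∉ U'} ⊆
          (fun m : ℕ => ((g m : ℕ))) ⁻¹' {k : ℕ | S k k ∉ U'} := fun m hm => hm
      refine Set.Finite.subset (Set.Finite.preimage ?_ hD1) hsub
      exact (Subtype.coe_injective.comp g.injective).injOn
    obtain ⟨M, hM⟩ := hpre.bddAbove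
    obtain ⟨m, hmge, hmV⟩ := hmeet (M + 1) V hV
    have htm : S ((g m : ℕ)) ((g m : ℕ)) ∈ U' := by
      by_contra hc
      have := hM hc
      omega
    have hprod : S ((g m : ℕ)) ((g m : ℕ)) * d m ∈ W := hUV (Set.mk_mem_prod (hU'sub htm) hmV)
    have heq2 : S ((g m : ℕ)) ((g m : ℕ)) * d m = d m := hS_eq _ _ _
    rw [heq2] at hprod
    exact (g m).2 hprod
  -- final contradiction
  have hW : IsOpen (({S 0 0} : Set T)ᶜ) := isClosed_singleton.isOpen_compl
  have hzW : z ∈ (({S 0 0} : Set T)ᶜ) := by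
    simp only [Set.mem_compl_iff, Set.mem_singleton_iff]
    exact fun hh => ht0 hh.symm
  have hmem : (z, z) ∈ (fun p : T × T => p.1 * p.2) ⁻¹' (({S 0 0} : Set T)ᶜ) := by
    have hzz2 : z * z ∈ (({S 0 0} : Set T)ᶜ) := by rw [hzz]; exact hzW
    exact hzz2
  obtain ⟨U, hU, V, hV, hUV⟩ :=
    mem_nhds_prod_iff.mp ((hW.preimage continuous_mul).mem_nhds hmem)
  obtain ⟨U', hU'sub, hU'o, hU'z⟩ := mem_nhds_iff.mp hU
  obtain ⟨V', hV'sub, hV'o, hV'z⟩ := mem_nhds_iff.mp hV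
  have h2 := D2 U' hU'o hU'z
  have h3 := D3 V' hV'o hV'z
  obtain ⟨m, hm⟩ := ((h2.union h3).infinite_compl).nonempty
  rw [Set.mem_compl_iff, Set.mem_union] at hm
  push_neg at hm
  obtain ⟨hm2, hm3⟩ := hm
  rw [Set.mem_setOf_eq, not_not] at hm2 hm3
  have hprod := hUV (Set.mk_mem_prod (hU'sub hm2) (hV'sub hm3))
  apply hprod
  show S 0 m * S m 0 ∈ ({S 0 0} : Set T)
  rw [Set.mem_singleton_iff]
  exact hS_eq 0 m 0
end

section
/- Let X be an infinite type and let S be a Tychonoff (completely regular Hausdorff) topological semigroup such that the square S × S is pseudocompact, i.e., every continuous real-valued function on S × S is bounded. Then there is no injective semigroup homomorphism from the semigroup of matrix units B_λ (λ = |X|) into S. -/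
open scoped Classical

universe u v

section Auxiliary

/-- Cluster point lemma for a "pseudocompact" space (in the guise: every continuous
real-valued function is bounded) admitting bump functions: every sequence of nonempty
open sets has a cluster point. -/
lemma mu_cluster_of_opens {W : Type*} [TopologicalSpace W]
    (hb : ∀ g : W → ℝ, Continuous g → ∃ C : ℝ, ∀ p, |g p| ≤ C)
    (bump : ∀ (U : Set W) (p : W), IsOpen U → p ∈ U →
      ∃ ψ : W → ℝ, Continuous ψ ∧ ψ p = 1 ∧ (∀ q, 0 ≤ ψ q) ∧ ∀ q, q ∉ U → ψ q = 0)
    (U : ℕ → Set W) (hUo : ∀ n, IsOpen (U n)) (hUne : ∀ n, (U n).Nonempty) :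
    ∃ p : W, ∀ N : Set W, IsOpen N → p ∈ N → {n | (N ∩ U n).Nonempty}.Infinite := by
  by_contra hcon
  push_neg at hcon
  choose N hNo hNp hNfin using hcon
  choose zp hzp using hUne
  choose ψ hψc hψ1 hψ0 hψU using fun n => bump (U n) (zp n) (hUo n) (hzp n)
  have hfin : ∀ p, {n | (N p ∩ U n).Nonempty}.Finite := fun p =>
    hNfin p
  set g : ℕ → W → ℝ := fun n q => ((n : ℝ) + 1) * ψ n q with hg
  have hgnonneg : ∀ n q, 0 ≤ g n q := by
    intro n q
    have : (0:ℝ) ≤ (n : ℝ) + 1 := by positivity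
    exact mul_nonneg this (hψ0 n q)
  have hvan : ∀ p q, q ∈ N p → ∀ n, n ∉ (hfin p).toFinset → g n q = 0 := by
    intro p q hq n hn
    simp only [Set.Finite.mem_toFinset, Set.mem_setOf_eq] at hn
    have hqU : q ∉ U n := fun hqU => hn ⟨q, hq, hqU⟩
    simp [hg, hψU n q hqU]
  set F : W → ℝ := fun q => ∑' n, g n q with hF
  have hFeq : ∀ p q, q ∈ N p → F q = ∑ n ∈ (hfin p).toFinset, g n q := by
    intro p q hq
    exact tsum_eq_sum (hvan p q hq)
  have hFc : Continuous F := by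
    rw [continuous_iff_continuousAt]
    intro p
    have hmem : N p ∈ nhds p := (hNo p).mem_nhds (hNp p)
    have hev : F =ᶠ[nhds p] fun q => ∑ n ∈ (hfin p).toFinset, g n q :=
      Filter.eventuallyEq_of_mem hmem (fun q hq => hFeq p q hq)
    have hc : ContinuousAt (fun q => ∑ n ∈ (hfin p).toFinset, g n q) p :=
      (continuous_finset_sum _ (fun n _ => continuous_const.mul (hψc n))).continuousAt
    exact hc.congr hev.symm
  obtain ⟨C, hC⟩ := hb F hFc
  set n₀ : ℕ := Nat.ceil C with hn₀
  have hmemn : n₀ ∈ (hfin (zp n₀)).toFinset := by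
    simp only [Set.Finite.mem_toFinset, Set.mem_setOf_eq]
    exact ⟨zp n₀, hNp (zp n₀), hzp n₀⟩
  have hlow : ((n₀ : ℝ) + 1) ≤ F (zp n₀) := by
    rw [hFeq (zp n₀) (zp n₀) (hNp (zp n₀))]
    have hsingle := Finset.single_le_sum (f := fun n => g n (zp n₀))
      (fun i _ => hgnonneg i (zp n₀)) hmemn
    calc ((n₀ : ℝ) + 1) = g n₀ (zp n₀) := by simp [hg, hψ1 n₀]
      _ ≤ _ := hsingle
  have hceil : C ≤ (n₀ : ℝ) := Nat.le_ceil C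
  have habs := hC (zp n₀)
  have := le_abs_self (F (zp n₀))
  linarith

/-- Bump functions on a completely regular space. -/
lemma mu_bump_cr {S : Type*} [TopologicalSpace S] [CompletelyRegularSpace S] :
    ∀ (U : Set S) (p : S), IsOpen U → p ∈ U →
      ∃ ψ : S → ℝ, Continuous ψ ∧ ψ p = 1 ∧ (∀ q, 0 ≤ ψ q) ∧ ∀ q, q ∉ U → ψ q = 0 := by
  intro U p hU hp
  obtain ⟨gI, hgc, hgp, hgK⟩ :=
    CompletelyRegularSpace.completely_regular p Uᶜ hU.isClosed_compl (by simpa using hp)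
  refine ⟨fun q => 1 - ((gI q : ℝ)), ?_, ?_, ?_, ?_⟩
  · exact continuous_const.sub (continuous_subtype_val.comp hgc)
  · simp [hgp]
  · intro q
    have h1 : ((gI q : ℝ)) ≤ 1 := (gI q).2.2
    show (0:ℝ) ≤ 1 - ((gI q : ℝ))
    linarith
  · intro q hq
    have : gI q = 1 := hgK hq
    simp [this]

/-- Bump functions on the square of a completely regular space. -/
lemma mu_bump_prod {S : Type*} [TopologicalSpace S] [CompletelyRegularSpace S] :
    ∀ (U : Set (S × S)) (p : S × S), IsOpen U → p ∈ U →
      ∃ ψ : S × S → ℝ, Continuous ψ ∧ ψ p = 1 ∧ (∀ q, 0 ≤ ψ q) ∧ ∀ q, q ∉ U → ψ q = 0 := by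
  intro U p hU hp
  obtain ⟨A, B, hA, hB, hpA, hpB, hsub⟩ := isOpen_prod_iff.mp hU p.1 p.2 (by simpa using hp)
  obtain ⟨ψ₁, hc1, h11, h01, hU1⟩ := mu_bump_cr A p.1 hA hpA
  obtain ⟨ψ₂, hc2, h12, h02, hU2⟩ := mu_bump_cr B p.2 hB hpB
  refine ⟨fun q => ψ₁ q.1 * ψ₂ q.2, (hc1.comp continuous_fst).mul (hc2.comp continuous_snd),
    by simp [h11, h12], fun q => mul_nonneg (h01 q.1) (h02 q.2), ?_⟩
  intro q hq
  by_cases h1 : q.1 ∈ A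
  · by_cases h2 : q.2 ∈ B
    · exact absurd (hsub (Set.mk_mem_prod h1 h2)) (by simpa using hq)
    · simp [hU2 q.2 h2]
  · simp [hU1 q.1 h1]

/-- Glicksberg-type lemma: if the square of `S` is pseudocompact, then every continuous
real function on `S × S` is "uniformly continuous in the first variable": at every point
`u₀` and for every `ε > 0` there is a neighborhood `U` of `u₀` such that
`|F (u, v) - F (u₀, v)| ≤ ε` for all `u ∈ U` and **all** `v`. -/
lemma mu_glicksberg {S : Type*} [TopologicalSpace S] [CompletelyRegularSpace S]
    (hpc : ∀ g : S × S → ℝ, Continuous g → ∃ C : ℝ, ∀ p : S × S, |g p| ≤ C)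
    (F : S × S → ℝ) (hF : Continuous F) (u₀ : S) (ε : ℝ) (hε : 0 < ε) :
    ∃ U : Set S, IsOpen U ∧ u₀ ∈ U ∧ ∀ u ∈ U, ∀ v, |F (u, v) - F (u₀, v)| ≤ ε := by
  by_contra hcon
  push_neg at hcon
  set Δ : S × S → ℝ := fun p => F p - F (u₀, p.2) with hΔdef
  have hΔ : Continuous Δ := hF.sub (hF.comp (continuous_const.prodMk continuous_snd))
  have h : ∀ T : Set S, IsOpen T → u₀ ∈ T → ∃ u ∈ T, ∃ v, ε < |Δ (u, v)| := by
    intro T hTo hTm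
    obtain ⟨u, hu, v, hv⟩ := hcon T hTo hTm
    exact ⟨u, hu, v, by simpa [hΔdef] using hv⟩
  have key : ∀ T : Set S, IsOpen T → u₀ ∈ T →
      ∃ d : (S × S) × Set S × Set S,
        d.1.1 ∈ T ∧ ε < |Δ d.1| ∧ IsOpen d.2.1 ∧ IsOpen d.2.2 ∧ u₀ ∈ d.2.1 ∧ d.1.2 ∈ d.2.2 ∧
        ∀ p ∈ d.2.1 ×ˢ d.2.2, |Δ p| < ε / 4 := by
    intro T hTo hTm
    obtain ⟨u, hu, v, hv⟩ := h T hTo hTm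
    have hopen : IsOpen {p : S × S | |Δ p| < ε / 4} :=
      isOpen_lt hΔ.abs continuous_const
    have hmem : (u₀, v) ∈ {p : S × S | |Δ p| < ε / 4} := by
      have : Δ (u₀, v) = 0 := by simp [hΔdef]
      simp [this]
      linarith
    obtain ⟨A, B, hA, hB, hu₀A, hvB, hsub⟩ := isOpen_prod_iff.mp hopen u₀ v hmem
    exact ⟨⟨(u, v), A, B⟩, hu, hv, hA, hB, hu₀A, hvB, fun p hp => hsub hp⟩
  choose dfn hd1 hd2 hd3 hd4 hd5 hd6 hd7 using key
  let Tseq : ℕ → {T : Set S // IsOpen T ∧ u₀ ∈ T} := fun n =>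
    Nat.rec ⟨Set.univ, isOpen_univ, Set.mem_univ u₀⟩
      (fun _ Tk => ⟨Tk.1 ∩ (dfn Tk.1 Tk.2.1 Tk.2.2).2.1,
        Tk.2.1.inter (hd3 Tk.1 Tk.2.1 Tk.2.2), Tk.2.2, hd5 Tk.1 Tk.2.1 Tk.2.2⟩) n
  let D : ℕ → (S × S) × Set S × Set S := fun k =>
    dfn (Tseq k).1 (Tseq k).2.1 (Tseq k).2.2
  have hTsucc : ∀ k, (Tseq (k + 1)).1 = (Tseq k).1 ∩ (D k).2.1 := fun k => rfl
  have hTsub : ∀ k, (Tseq (k + 1)).1 ⊆ (Tseq k).1 := by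
    intro k
    rw [hTsucc k]
    exact Set.inter_subset_left
  have hTA : ∀ k, (Tseq (k + 1)).1 ⊆ (D k).2.1 := by
    intro k
    rw [hTsucc k]
    exact Set.inter_subset_right
  have hTle : ∀ i j : ℕ, i ≤ j → (Tseq j).1 ⊆ (Tseq i).1 := by
    intro i j hij
    induction j, hij using Nat.le_induction with
    | base => exact subset_rfl
    | succ j hj ih => exact (hTsub j).trans ih
  have hTltA : ∀ k m : ℕ, k < m → (Tseq m).1 ⊆ (D k).2.1 :=
    fun k m hkm => (hTle (k + 1) m hkm).trans (hTA k)
  set Q : ℕ → Set (S × S) := fun k =>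
    {p : S × S | ε < |Δ p|} ∩ ((Tseq k).1 ×ˢ (D k).2.2) with hQdef
  have hQo : ∀ k, IsOpen (Q k) := by
    intro k
    exact (isOpen_lt continuous_const hΔ.abs).inter
      ((Tseq k).2.1.prod (hd4 (Tseq k).1 (Tseq k).2.1 (Tseq k).2.2))
  have hQne : ∀ k, (Q k).Nonempty := by
    intro k
    refine ⟨(D k).1, ?_, ?_⟩
    · exact hd2 (Tseq k).1 (Tseq k).2.1 (Tseq k).2.2
    · exact Set.mem_prod.mpr ⟨hd1 (Tseq k).1 (Tseq k).2.1 (Tseq k).2.2,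
        hd6 (Tseq k).1 (Tseq k).2.1 (Tseq k).2.2⟩
  obtain ⟨p₀, hp₀⟩ := mu_cluster_of_opens hpc mu_bump_prod Q hQo hQne
  have hp₀abs : ε ≤ |Δ p₀| := by
    by_contra hlt
    push_neg at hlt
    have hNo : IsOpen {p : S × S | |Δ p| < ε} := isOpen_lt hΔ.abs continuous_const
    obtain ⟨k, hk⟩ := (hp₀ _ hNo hlt).nonempty
    obtain ⟨q, hqN, hqQ⟩ := hk
    have h1 : ε < |Δ q| := hqQ.1
    have h2 : |Δ q| < ε := hqN
    linarith
  have hGo : IsOpen {p : S × S | ε / 2 < |Δ p|} := isOpen_lt continuous_const hΔ.abs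
  have hp₀G : p₀ ∈ {p : S × S | ε / 2 < |Δ p|} := by
    simp only [Set.mem_setOf_eq]
    linarith
  obtain ⟨Ns, Nt, hNs, hNt, hsNs, htNt, hsubG⟩ :=
    isOpen_prod_iff.mp hGo p₀.1 p₀.2 (by simpa using hp₀G)
  have hI₁ := hp₀ (Ns ×ˢ Nt) (hNs.prod hNt) (Set.mem_prod.mpr ⟨hsNs, htNt⟩)
  obtain ⟨k, hk⟩ := hI₁.nonempty
  obtain ⟨⟨u, v⟩, huvN, huvQ⟩ := hk
  have hvNt : v ∈ Nt := huvN.2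
  have hvB : v ∈ (D k).2.2 := huvQ.2.2
  have hI₂ := hp₀ (Ns ×ˢ (Set.univ : Set S)) (hNs.prod isOpen_univ)
    (Set.mem_prod.mpr ⟨hsNs, Set.mem_univ _⟩)
  obtain ⟨m, hmI, hmk⟩ := (hI₂.diff (Set.finite_Iic k)).nonempty
  have hkm : k < m := by simpa using hmk
  obtain ⟨⟨u', v'⟩, hu'vN, hu'vQ⟩ := hmI
  have hu'Ns : u' ∈ Ns := hu'vN.1
  have hu'T : u' ∈ (Tseq m).1 := hu'vQ.2.1
  have hu'A : u' ∈ (D k).2.1 := hTltA k m hkm hu'T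
  have hfinal1 : |Δ (u', v)| < ε / 4 :=
    hd7 (Tseq k).1 (Tseq k).2.1 (Tseq k).2.2 (u', v) (Set.mem_prod.mpr ⟨hu'A, hvB⟩)
  have hfinal2 : ε / 2 < |Δ (u', v)| := hsubG (Set.mem_prod.mpr ⟨hu'Ns, hvNt⟩)
  linarith

end Auxiliary

/-- An infinite semigroup of matrix units does not embed into a Tychonoff
topological semigroup whose square is pseudocompact. -/
theorem no_embedding_matrixUnits_into_pseudocompact_square
    {X : Type u} [Infinite X]
    {S : Type v} [Semigroup S] [TopologicalSpace S] [T2Space S] [CompletelyRegularSpace S]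
    [ContinuousMul S]
    (hpc : ∀ g : S × S → ℝ, Continuous g → ∃ C : ℝ, ∀ p : S × S, |g p| ≤ C) :
    ¬ ∃ f : MatrixUnits X → S,
        (∀ a b : MatrixUnits X, f (a * b) = f a * f b) ∧ Function.Injective f := by
  rintro ⟨f, hmul, hinj⟩
  -- an injective sequence in X
  set a : ℕ → X := fun n => (Infinite.natEmbedding X) n with ha_def
  have ha : Function.Injective a := (Infinite.natEmbedding X).injective
  -- matrix units
  set r : ℕ → S := fun n => f (some (a 0, a (n + 1))) with hr_def
  set c : ℕ → S := fun n => f (some (a (n + 1), a 0)) with hc_def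
  set e : S := f (some (a 0, a 0)) with he_def
  set z : S := f none with hz_def
  -- products
  have hxy_eq : ∀ n : ℕ,
      (some (a 0, a (n + 1)) : MatrixUnits X) * some (a (n + 1), a 0) = some (a 0, a 0) := by
    intro n
    show muMul _ _ = _
    simp [muMul]
  have hxy_ne : ∀ n m : ℕ, n ≠ m →
      (some (a 0, a (n + 1)) : MatrixUnits X) * some (a (m + 1), a 0) = none := by
    intro n m hnm
    have hne : a (n + 1) ≠ a (m + 1) := fun h => hnm (Nat.succ_injective (ha h))
    show muMul _ _ = _
    simp [muMul, hne]
  have hrc_eq : ∀ n : ℕ, r n * c n = e := by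
    intro n
    rw [hr_def, hc_def, he_def, ← hmul, hxy_eq]
  have hrc_ne : ∀ n m : ℕ, n ≠ m → r n * c m = z := by
    intro n m hnm
    rw [hr_def, hc_def, hz_def, ← hmul, hxy_ne n m hnm]
  have he_ne_z : e ≠ z := by
    intro h
    have := hinj h
    simp at this
  -- separating function
  obtain ⟨gI, hgc, hge, hgz⟩ :=
    CompletelyRegularSpace.completely_regular e {z} isClosed_singleton
      (by simpa using he_ne_z)
  set φ : S → ℝ := fun q => 1 - ((gI q : ℝ)) with hφ_def
  have hφc : Continuous φ := continuous_const.sub (continuous_subtype_val.comp hgc)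
  have hφe : φ e = 1 := by simp [hφ_def, hge]
  have hφz : φ z = 0 := by
    have : gI z = 1 := hgz rfl
    simp [hφ_def, this]
  -- the function F on S × S
  set F : S × S → ℝ := fun p => φ (p.1 * p.2) with hF_def
  have hFc : Continuous F := hφc.comp (continuous_fst.mul continuous_snd)
  have hF1 : ∀ n : ℕ, F (r n, c n) = 1 := by
    intro n
    simp only [hF_def]
    rw [hrc_eq n, hφe]
  have hF0 : ∀ n m : ℕ, n ≠ m → F (r n, c m) = 0 := by
    intro n m hnm
    simp only [hF_def]
    rw [hrc_ne n m hnm, hφz]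
  -- boundedness for S itself
  have hbS : ∀ g : S → ℝ, Continuous g → ∃ C : ℝ, ∀ p : S, |g p| ≤ C := by
    intro g hg
    obtain ⟨C, hC⟩ := hpc (fun p => g p.1) (hg.comp continuous_fst)
    exact ⟨C, fun p => hC (p, p)⟩
  -- uniform neighborhoods around each r n
  have hU : ∀ n : ℕ, ∃ U : Set S, IsOpen U ∧ r n ∈ U ∧
      ∀ u ∈ U, ∀ v, |F (u, v) - F (r n, v)| ≤ 1 / 8 :=
    fun n => mu_glicksberg hpc F hFc (r n) (1 / 8) (by norm_num)
  choose U hUo hUmem hUprop using hU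
  -- cluster point of the U n in S
  obtain ⟨s, hs⟩ := mu_cluster_of_opens hbS mu_bump_cr U hUo (fun n => ⟨r n, hUmem n⟩)
  -- uniform neighborhood around s
  obtain ⟨N, hNo, hNmem, hNprop⟩ := mu_glicksberg hpc F hFc s (1 / 8) (by norm_num)
  have hinf := hs N hNo hNmem
  obtain ⟨n, hn⟩ := hinf.nonempty
  obtain ⟨m, hmmem, hmne⟩ := (hinf.diff (Set.finite_singleton n)).nonempty
  have hmn : m ≠ n := by simpa using hmne
  obtain ⟨u, huN, huU⟩ := hn
  obtain ⟨u', hu'N, hu'U⟩ := hmmem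
  -- the contradiction at v := c n
  have h1 : |F (u, c n) - F (r n, c n)| ≤ 1 / 8 := hUprop n u huU (c n)
  have h2 : |F (u, c n) - F (s, c n)| ≤ 1 / 8 := hNprop u huN (c n)
  have h3 : |F (u', c n) - F (s, c n)| ≤ 1 / 8 := hNprop u' hu'N (c n)
  have h4 : |F (u', c n) - F (r m, c n)| ≤ 1 / 8 := hUprop m u' hu'U (c n)
  rw [hF1 n] at h1
  rw [hF0 m n hmn] at h4
  rw [abs_le] at h1 h2 h3 h4
  linarith [h1.1, h1.2, h2.1, h2.2, h3.1, h3.2, h4.1, h4.2]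
end

section
/- Let X be a set (type) of cardinality λ ≥ 1, n a positive integer, and let τ be a Hausdorff topology on exp_n(λ) = {A ⊆ X : |A| ≤ n} making the intersection operation ∩ continuous. Then for every e ∈ exp_n(λ) the upper set ↑e = {f ∈ exp_n(λ) : e ⊆ f} is an open subset of (exp_n(λ), τ); in particular every element of exp_n(λ) is a local minimum. -/
open scoped Classical

universe u

/-- The semilattice `exp_n(λ) = {A ⊆ X : |A| ≤ n}` (with the operation of intersection),
where `λ = |X|`. -/
def EN (X : Type u) (n : ℕ) : Type u := {A : Finset X // A.card ≤ n}

/-- The semilattice operation on `exp_n(λ)`: intersection. -/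
noncomputable def enInter {X : Type u} {n : ℕ} (A B : EN X n) : EN X n :=
  ⟨A.1 ∩ B.1, le_trans (Finset.card_le_card Finset.inter_subset_left) A.2⟩

/-- For any Hausdorff topology on `exp_n(λ)` making intersection continuous,
every upper set `↑e = {f : e ⊆ f}` is open; in particular, every element is a local
minimum. -/
theorem expn_upperSet_open
    {X : Type u} [Nonempty X] (n : ℕ) (hn : 0 < n)
    [TopologicalSpace (EN X n)] [T2Space (EN X n)]
    (hcont : Continuous fun p : EN X n × EN X n => enInter p.1 p.2) :
    ∀ e : EN X n,
      IsOpen {f : EN X n | e.1 ⊆ f.1} ∧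
      ∃ U : Set (EN X n), IsOpen U ∧ e ∈ U ∧ ∀ f ∈ U, f.1 ⊆ e.1 → e.1 ⊆ f.1 := by
  intro e
  -- the continuous map f ↦ e ∩ f
  have hg : Continuous fun f : EN X n => enInter e f :=
    hcont.comp (Continuous.prodMk continuous_const continuous_id)
  -- the finite set of proper subsets of e
  set F : Set (EN X n) := {A : EN X n | A.1 ⊆ e.1 ∧ A ≠ e} with hF
  have hFfin : F.Finite := by
    have h1 : ({A : EN X n | A.1 ⊆ e.1} : Set (EN X n)).Finite := by
      have : ({A : EN X n | A.1 ⊆ e.1} : Set (EN X n))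
          = Subtype.val ⁻¹' ↑(e.1.powerset) := by
        ext A; simp only [Set.mem_setOf_eq, Set.mem_preimage, Finset.mem_coe, Finset.mem_powerset]
        exact Finset.mem_powerset.symm
      rw [this]
      exact (e.1.powerset.finite_toSet).preimage
        (Set.injOn_of_injective Subtype.val_injective)
    exact h1.subset fun A hA => hA.1
  have hFclosed : IsClosed F := hFfin.isClosed
  have hkey : {f : EN X n | e.1 ⊆ f.1} = ((fun f => enInter e f) ⁻¹' F)ᶜ := by
    ext f
    simp only [Set.mem_setOf_eq, Set.mem_compl_iff, Set.mem_preimage, hF,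
      Set.mem_setOf_eq, not_and, enInter]
    show e.1 ⊆ f.1 ↔ ¬ (e.1 ∩ f.1 ⊆ e.1 ∧ (⟨e.1 ∩ f.1, le_trans (Finset.card_le_card Finset.inter_subset_left) e.2⟩ : EN X n) ≠ e)
    simp only [not_and]
    constructor
    · intro h _ hne
      exact hne (Subtype.ext (Finset.inter_eq_left.mpr h))
    · intro h
      have h2 := h Finset.inter_subset_left
      have h3 : e.1 ∩ f.1 = e.1 := by
        by_contra hne
        exact h2 fun heq => hne (congrArg Subtype.val heq)
      exact Finset.inter_eq_left.mp h3
  have hopen : IsOpen {f : EN X n | e.1 ⊆ f.1} := by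
    rw [hkey]
    exact (hFclosed.preimage hg).isOpen_compl
  refine ⟨hopen, {f : EN X n | e.1 ⊆ f.1}, hopen, ?_, fun f hf _ => hf⟩
  exact Set.mem_setOf_eq ▸ subset_rfl
end
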